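/- arXiv:2408.12905 — 6 statements merged into one kernel-verified Lean document; each statement's English description precedes it below -/
import Mathlib

section
/- For every positive integer n, exp(1/(13n)) ≤ n! · e^n / (√(2π) · n^(n+1/2)) ≤ exp(1/(12n)). -/
open Real Filter Finset Topology

lemma two_k_three_le (k : ℕ) : (2*(k:ℝ)+3) ≤ 3^(k+1) := by
  induction k with
  | zero => norm_num
  | succ k ih => push_cast [pow_succ] at *; nlinarith

lemma step_bounds (m : ℕ) :
    1 / (12 * ((m:ℝ)+1) + 1) - 1 / (12 * ((m:ℝ)+2) + 1) ≤
      Real.log (Stirling.stirlingSeq (m + 1)) - Real.log (Stirling.stirlingSeq (m + 2)) ∧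
    Real.log (Stirling.stirlingSeq (m + 1)) - Real.log (Stirling.stirlingSeq (m + 2)) ≤
      1 / (12 * ((m:ℝ)+1)) - 1 / (12 * ((m:ℝ)+2)) := by
  have hm : (0:ℝ) ≤ (m:ℝ) := Nat.cast_nonneg m
  have hsum := Stirling.log_stirlingSeq_diff_hasSum m
  set x : ℝ := ((1 : ℝ) / (2 * (↑(m+1):ℝ) + 1)) ^ 2 with hxdef
  have hx0 : (0:ℝ) ≤ x := sq_nonneg _
  have hxval : x = 1 / (2*(m:ℝ)+3)^2 := by
    rw [hxdef, div_pow, one_pow]; push_cast; congr 1; ring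
  have h2 : (0:ℝ) < (2*(m:ℝ)+3)^2 := by positivity
  have hx1 : x < 1 := by
    rw [hxval, div_lt_one h2]; nlinarith
  have hD : (0:ℝ) < 3*(2*(m:ℝ)+3)^2 - 1 := by nlinarith
  have hE : (0:ℝ) < (2*(m:ℝ)+3)^2 - 1 := by nlinarith
  have hx3 : x/3 < 1 := by linarith
  have hx30 : (0:ℝ) ≤ x/3 := by linarith
  constructor
  · -- lower bound
    have g : HasSum (fun k : ℕ => (x/3) ^ (k+1)) ((x/3) * (1 - x/3)⁻¹) := by
      have := (hasSum_geometric_of_lt_one hx30 hx3).mul_left (x/3)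
      simp_rw [← _root_.pow_succ'] at this
      exact this
    have hab : ∀ k : ℕ, (x/3) ^ (k+1) ≤ (1 : ℝ) / (2 * (↑(k + 1):ℝ) + 1) * x ^ (k+1) := by
      intro k
      have h3 : (2 * ((↑(k+1)):ℝ) + 1) ≤ 3^(k+1) := by push_cast; linarith [two_k_three_le k]
      calc (x/3)^(k+1) = x^(k+1) * ((3:ℝ)^(k+1))⁻¹ := by rw [div_pow]; ring
        _ ≤ x^(k+1) * (2*((↑(k+1)):ℝ)+1)⁻¹ := by
            gcongr
        _ = 1 / (2*((↑(k+1)):ℝ)+1) * x^(k+1) := by ring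
    have key := hasSum_le hab g hsum
    refine le_trans ?_ key
    have hA : (1:ℝ) - x/3 = (3*(2*(m:ℝ)+3)^2 - 1)/(3*(2*(m:ℝ)+3)^2) := by
      rw [hxval]; field_simp
    have e1 : x/3 * (1 - x/3)⁻¹ = 1/(3*(2*(m:ℝ)+3)^2 - 1) := by
      rw [hA, inv_div, hxval]; field_simp
    rw [e1, div_sub_div _ _ (by positivity) (by positivity),
      div_le_div_iff₀ (by positivity) hD]
    nlinarith
  · -- upper bound
    have g : HasSum (fun k : ℕ => (1:ℝ)/3 * x ^ (k+1)) (1/3 * (x * (1 - x)⁻¹)) := by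
      have := ((hasSum_geometric_of_lt_one hx0 hx1).mul_left x).mul_left (1/3:ℝ)
      simp_rw [← _root_.pow_succ'] at this
      exact this
    have hab : ∀ k : ℕ, (1 : ℝ) / (2 * ((↑(k + 1)):ℝ) + 1) * x ^ (k+1) ≤ (1:ℝ)/3 * x ^ (k+1) := by
      intro k
      apply mul_le_mul_of_nonneg_right _ (pow_nonneg hx0 _)
      rw [div_le_div_iff₀ (by positivity) (by norm_num)]
      push_cast; linarith [Nat.cast_nonneg (α := ℝ) k]
    have key := hasSum_le hab hsum g
    refine key.trans ?_
    have hA : (1:ℝ) - x = ((2*(m:ℝ)+3)^2 - 1)/((2*(m:ℝ)+3)^2) := by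
      rw [hxval]; field_simp
    have e2 : (1:ℝ)/3 * (x * (1 - x)⁻¹) = 1/(3*((2*(m:ℝ)+3)^2-1)) := by
      rw [hA, inv_div, hxval]; field_simp
    rw [e2, div_sub_div _ _ (by positivity) (by positivity),
      div_le_div_iff₀ (by positivity) (by positivity)]
    nlinarith

lemma log_bounds (n : ℕ) (hn : 0 < n) :
    1/(12*(n:ℝ)+1) ≤ Real.log (Stirling.stirlingSeq n) - Real.log (Real.sqrt π) ∧
    Real.log (Stirling.stirlingSeq n) - Real.log (Real.sqrt π) ≤ 1/(12*(n:ℝ)) := by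
  obtain ⟨p, rfl⟩ : ∃ p, n = p + 1 := ⟨n-1, by omega⟩
  set F : ℕ → ℝ := fun j => Real.log (Stirling.stirlingSeq (p+j+1)) with hF
  set U : ℕ → ℝ := fun j => 1/(12*(((p+j:ℕ):ℝ)+1)) with hU
  set L : ℕ → ℝ := fun j => 1/(12*(((p+j:ℕ):ℝ)+1)+1) with hL
  have hlow : ∀ m : ℕ, L 0 - L m ≤ F 0 - F m := by
    intro m
    rw [← sum_range_sub' L m, ← sum_range_sub' F m]
    refine sum_le_sum fun j _ => ?_
    calc L j - L (j+1)
        = 1/(12*(((p+j:ℕ):ℝ)+1)+1) - 1/(12*(((p+j:ℕ):ℝ)+2)+1) := by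
          simp only [hL]; push_cast; ring_nf
      _ ≤ F j - F (j+1) := (step_bounds (p+j)).1
  have hup : ∀ m : ℕ, F 0 - F m ≤ U 0 - U m := by
    intro m
    rw [← sum_range_sub' U m, ← sum_range_sub' F m]
    refine sum_le_sum fun j _ => ?_
    calc F j - F (j+1)
        ≤ 1/(12*(((p+j:ℕ):ℝ)+1)) - 1/(12*(((p+j:ℕ):ℝ)+2)) := (step_bounds (p+j)).2
      _ = U j - U (j+1) := by simp only [hU]; push_cast; ring_nf
  have hmap : Tendsto (fun m : ℕ => p + m + 1) atTop atTop :=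
    tendsto_atTop_mono (fun m => by simp only [id_eq]; omega) tendsto_id
  have hlimF : Tendsto F atTop (𝓝 (Real.log (Real.sqrt π))) :=
    (Stirling.tendsto_stirlingSeq_sqrt_pi.comp hmap).log
      (ne_of_gt (Real.sqrt_pos.mpr Real.pi_pos))
  have hnat : Tendsto (fun m : ℕ => ((p+m:ℕ):ℝ)) atTop atTop :=
    tendsto_natCast_atTop_atTop.comp (tendsto_atTop_mono (fun m => by simp only [id_eq]; omega) tendsto_id)
  have hlimU : Tendsto U atTop (𝓝 0) := by
    have h1 : Tendsto (fun m : ℕ => 12*(((p+m:ℕ):ℝ)+1)) atTop atTop :=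
      tendsto_atTop_mono (fun m => by
        have := Nat.cast_nonneg (α := ℝ) (p+m); linarith) hnat
    refine Tendsto.congr (fun m => ?_) h1.inv_tendsto_atTop
    simp [hU, one_div]
  have hlimL : Tendsto L atTop (𝓝 0) := by
    have h1 : Tendsto (fun m : ℕ => 12*(((p+m:ℕ):ℝ)+1)+1) atTop atTop :=
      tendsto_atTop_mono (fun m => by
        have := Nat.cast_nonneg (α := ℝ) (p+m); linarith) hnat
    refine Tendsto.congr (fun m => ?_) h1.inv_tendsto_atTop
    simp [hL, one_div]
  have hF0 : Tendsto (fun m => F 0 - F m) atTop (𝓝 (F 0 - Real.log (Real.sqrt π))) :=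
    tendsto_const_nhds.sub hlimF
  constructor
  · have h := le_of_tendsto_of_tendsto' (tendsto_const_nhds.sub hlimL) hF0 hlow
    have hL0 : L 0 - 0 = 1/(12*((p:ℝ)+1)+1) := by simp [hL]
    have hFv : F 0 = Real.log (Stirling.stirlingSeq (p+1)) := rfl
    rw [hL0, hFv] at h
    calc 1/(12*((p+1:ℕ):ℝ)+1) = 1/(12*((p:ℝ)+1)+1) := by push_cast; ring_nf
      _ ≤ _ := h
  · have h := le_of_tendsto_of_tendsto' hF0 (tendsto_const_nhds.sub hlimU) hup
    have hU0 : U 0 - 0 = 1/(12*((p:ℝ)+1)) := by simp [hU]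
    have hFv : F 0 = Real.log (Stirling.stirlingSeq (p+1)) := rfl
    rw [hU0, hFv] at h
    calc Real.log (Stirling.stirlingSeq (p+1)) - Real.log (Real.sqrt π)
        ≤ 1/(12*((p:ℝ)+1)) := h
      _ = 1/(12*((p+1:ℕ):ℝ)) := by push_cast; ring_nf

theorem stmt_3 (n : ℕ) (hn : 0 < n) :
    Real.exp (1 / (13 * n)) ≤
        (n.factorial : ℝ) * Real.exp n
          / (Real.sqrt (2 * Real.pi) * (n : ℝ) ^ ((n : ℝ) + 1 / 2)) ∧
      (n.factorial : ℝ) * Real.exp n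
          / (Real.sqrt (2 * Real.pi) * (n : ℝ) ^ ((n : ℝ) + 1 / 2))
        ≤ Real.exp (1 / (12 * n)) := by
  have hn0 : (0:ℝ) < (n:ℝ) := by exact_mod_cast hn
  have hspos : 0 < Stirling.stirlingSeq n := by
    obtain ⟨p, rfl⟩ : ∃ p, n = p + 1 := ⟨n-1, by omega⟩
    exact Stirling.stirlingSeq'_pos p
  have hsqpi : (0:ℝ) < Real.sqrt π := Real.sqrt_pos.mpr Real.pi_pos
  have hrpow : (n:ℝ) ^ ((n:ℝ) + 1/2) = (n:ℝ)^(n:ℕ) * Real.sqrt n := by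
    rw [Real.rpow_add hn0, Real.rpow_natCast, Real.sqrt_eq_rpow]
  have hEq : (n.factorial : ℝ) * Real.exp n
      / (Real.sqrt (2 * π) * (n : ℝ) ^ ((n : ℝ) + 1/2))
      = Stirling.stirlingSeq n / Real.sqrt π := by
    rw [Stirling.stirlingSeq, hrpow, Real.sqrt_mul (by norm_num : (0:ℝ) ≤ 2) π,
      Real.sqrt_mul (by norm_num : (0:ℝ) ≤ 2) (n:ℝ), div_pow, ← Real.exp_one_pow]
    have e0 : Real.exp 1 ≠ 0 := (Real.exp_pos 1).ne'
    have hsn : Real.sqrt (n:ℝ) ≠ 0 := (Real.sqrt_pos.mpr hn0).ne'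
    have hs2 : Real.sqrt 2 ≠ 0 := by positivity
    field_simp
  have hlog := log_bounds n hn
  have hkey : Stirling.stirlingSeq n / Real.sqrt π
      = Real.exp (Real.log (Stirling.stirlingSeq n) - Real.log (Real.sqrt π)) := by
    rw [Real.exp_sub, Real.exp_log hspos, Real.exp_log hsqpi]
  rw [hEq, hkey]
  constructor
  · rw [Real.exp_le_exp]
    refine le_trans ?_ hlog.1
    rw [div_le_div_iff₀ (by positivity) (by positivity)]
    have h1n : (1:ℝ) ≤ (n:ℝ) := by exact_mod_cast hn
    nlinarith
  · rw [Real.exp_le_exp]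
    exact hlog.2.trans (by norm_num)
end

section
/- For every real u > 0, (u²/(u²+1))·(1/u)·exp(-u²/2) < ∫_u^∞ exp(-x²/2) dx < ((u²+2)/(u²+3))·(1/u)·exp(-u²/2). -/
open Real MeasureTheory Set Filter
open scoped ENNReal

lemma exp_tendsto0 : Tendsto (fun x : ℝ => Real.exp (-x^2/2)) atTop (nhds 0) := by
  have h1 : Tendsto (fun x : ℝ => -x^2/2) atTop atBot := by
    have he : (fun x : ℝ => -x^2/2) = fun x : ℝ => x^2 * (-(1/2)) := by funext x; ring
    rw [he]
    exact (tendsto_pow_atTop two_ne_zero).atTop_mul_const_of_neg (by norm_num)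
  exact Real.tendsto_exp_atBot.comp h1

lemma exp_hasDeriv (x : ℝ) :
    HasDerivAt (fun x : ℝ => Real.exp (-x^2/2)) (Real.exp (-x^2/2) * (-x)) x := by
  have hx2 : HasDerivAt (fun x : ℝ => -x^2/2) (-x) x := by
    have := ((hasDerivAt_pow 2 x).neg).div_const 2
    refine this.congr_deriv ?_
    push_cast; ring
  exact hx2.exp

lemma L_hasDeriv (x : ℝ) :
    HasDerivAt (fun x : ℝ => -(x/(x^2+1)) * Real.exp (-x^2/2))
      (Real.exp (-x^2/2) * ((x^4+2*x^2-1)/(x^2+1)^2)) x := by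
  have hden : x^2 + 1 ≠ 0 := by positivity
  have h1 := (hasDerivAt_id x).div ((hasDerivAt_pow 2 x).add_const 1) hden
  have := (h1.neg).mul (exp_hasDeriv x)
  refine this.congr_deriv ?_
  simp only [Pi.neg_apply, Pi.div_apply, Pi.add_apply, id]
  field_simp
  ring

lemma U_hasDeriv (x : ℝ) (hx : x ≠ 0) :
    HasDerivAt (fun x : ℝ => -((x^2+2)/(x^3+3*x)) * Real.exp (-x^2/2))
      (Real.exp (-x^2/2) * ((x^6+6*x^4+9*x^2+6)/(x^3+3*x)^2)) x := by
  have hden : x^3 + 3*x ≠ 0 := by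
    intro h
    have : x * (x^2 + 3) = 0 := by linarith
    rcases mul_eq_zero.1 this with h1 | h2
    · exact hx h1
    · nlinarith [sq_nonneg x]
  have h1 := (((hasDerivAt_pow 2 x).add_const 2)).div
      (((hasDerivAt_pow 3 x).add ((hasDerivAt_id x).const_mul 3))) hden
  have := (h1.neg).mul (exp_hasDeriv x)
  refine this.congr_deriv ?_
  simp only [Pi.neg_apply, Pi.div_apply, Pi.add_apply, id]
  field_simp
  ring

theorem stmt_6 (u : ℝ) (hu : 0 < u) :
    (u ^ 2 / (u ^ 2 + 1)) * (1 / u) * Real.exp (-u ^ 2 / 2)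
        < ∫ x in Set.Ioi u, Real.exp (-x ^ 2 / 2) ∧
      (∫ x in Set.Ioi u, Real.exp (-x ^ 2 / 2))
        < ((u ^ 2 + 2) / (u ^ 2 + 3)) * (1 / u) * Real.exp (-u ^ 2 / 2) := by
  have hexp_int : IntegrableOn (fun x : ℝ => Real.exp (-x^2/2)) (Set.Ioi u) := by
    have he : (fun x : ℝ => Real.exp (-x^2/2)) = fun x : ℝ => Real.exp (-(1/2) * x^2) := by
      funext x; congr 1; ring
    rw [he]
    exact (integrable_exp_neg_mul_sq (by norm_num)).integrableOn
  -- lower bound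
  set L' : ℝ → ℝ := fun x => Real.exp (-x^2/2) * ((x^4+2*x^2-1)/(x^2+1)^2) with hL'def
  have hL'cont : Continuous L' := by
    apply (Real.continuous_exp.comp (by continuity)).mul
    exact Continuous.div (by continuity) (by continuity) fun x => by positivity
  have hL'int : IntegrableOn L' (Set.Ioi u) := by
    refine hexp_int.mono' hL'cont.aestronglyMeasurable.restrict ?_
    refine Filter.Eventually.of_forall fun x => ?_
    rw [hL'def]
    simp only [norm_mul, Real.norm_eq_abs, abs_of_pos (Real.exp_pos _)]
    have h1 : |(x^4+2*x^2-1)/(x^2+1)^2| ≤ 1 := by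
      rw [abs_div, abs_of_pos (by positivity : (0:ℝ) < (x^2+1)^2), div_le_one (by positivity),
        abs_le]
      constructor <;> nlinarith [sq_nonneg x, sq_nonneg (x^2)]
    calc Real.exp (-x^2/2) * |(x^4+2*x^2-1)/(x^2+1)^2|
        ≤ Real.exp (-x^2/2) * 1 := by
          exact mul_le_mul_of_nonneg_left h1 (Real.exp_pos _).le
      _ = Real.exp (-x^2/2) := mul_one _
  have hLtend : Tendsto (fun x : ℝ => -(x/(x^2+1)) * Real.exp (-x^2/2)) atTop (nhds 0) := by
    have h0 : (0:ℝ) = -0 := by norm_num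
    refine tendsto_of_tendsto_of_tendsto_of_le_of_le'
      (g := fun x : ℝ => -Real.exp (-x^2/2)) (h := fun x : ℝ => Real.exp (-x^2/2))
      (by simpa using exp_tendsto0.neg) exp_tendsto0 ?_ ?_
    · filter_upwards [eventually_ge_atTop (0:ℝ)] with x hx
      have hr : x/(x^2+1) ≤ 1 := by
        rw [div_le_one (by positivity)]; nlinarith
      have := mul_le_mul_of_nonneg_right hr (Real.exp_pos (-x^2/2)).le
      nlinarith
    · filter_upwards [eventually_ge_atTop (0:ℝ)] with x hx
      have hr : 0 ≤ x/(x^2+1) := by positivity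
      nlinarith [Real.exp_pos (-x^2/2)]
  have hLI : ∫ x in Set.Ioi u, L' x = u/(u^2+1) * Real.exp (-u^2/2) := by
    have h := integral_Ioi_of_hasDerivAt_of_tendsto
      (f := fun x : ℝ => -(x/(x^2+1)) * Real.exp (-x^2/2)) (f' := L')
      ((L_hasDeriv u).continuousAt.continuousWithinAt)
      (fun x _ => L_hasDeriv x) hL'int hLtend
    rw [h]; ring
  have key : ∀ x : ℝ, Real.exp (-x^2/2) - L' x = Real.exp (-x^2/2) * (2/(x^2+1)^2) := by
    intro x
    rw [hL'def]
    have : (x^2+1)^2 ≠ 0 := by positivity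
    field_simp
    ring
  have hpos1 : 0 < ∫ x in Set.Ioi u, (Real.exp (-x^2/2) - L' x) := by
    rw [setIntegral_pos_iff_support_of_nonneg_ae]
    · have hs : Function.support (fun x : ℝ => Real.exp (-x^2/2) - L' x) = Set.univ := by
        ext x
        simp only [Function.mem_support, Set.mem_univ, iff_true]
        rw [key x]
        positivity
      rw [hs, Set.univ_inter, Real.volume_Ioi]
      exact ENNReal.zero_lt_top
    · refine Filter.Eventually.of_forall fun x => ?_
      show (0:ℝ) ≤ Real.exp (-x^2/2) - L' x
      rw [key x]; positivity
    · exact hexp_int.sub hL'int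
  rw [integral_sub hexp_int hL'int, hLI] at hpos1
  have hlow : (u ^ 2 / (u ^ 2 + 1)) * (1 / u) * Real.exp (-u ^ 2 / 2)
      < ∫ x in Set.Ioi u, Real.exp (-x ^ 2 / 2) := by
    have he : (u ^ 2 / (u ^ 2 + 1)) * (1 / u) = u/(u^2+1) := by
      field_simp
    rw [he]; linarith
  -- upper bound
  set U' : ℝ → ℝ := fun x => Real.exp (-x^2/2) * ((x^6+6*x^4+9*x^2+6)/(x^3+3*x)^2) with hU'def
  have hden : ∀ x : ℝ, u ≤ x → 0 < x^3 + 3*x := by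
    intro x hx
    have hx0 : 0 < x := lt_of_lt_of_le hu hx
    positivity
  have hU'cont : ContinuousOn U' (Set.Ioi u) := by
    intro x hx
    have hx0 : x ≠ 0 := by
      have := hden x (le_of_lt hx); intro h; rw [h] at this; norm_num at this
    have hdx : x^3 + 3*x ≠ 0 := (hden x (le_of_lt hx)).ne'
    have hcexp : Continuous fun x : ℝ => Real.exp (-x^2/2) :=
      Real.continuous_exp.comp ((continuous_pow 2).neg.div_const 2)
    have hnum : Continuous fun x : ℝ => x^6+6*x^4+9*x^2+6 := by fun_prop
    have hd : Continuous fun x : ℝ => (x^3+3*x)^2 := by fun_prop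
    have : ContinuousAt U' x :=
      hcexp.continuousAt.mul
        (ContinuousAt.div hnum.continuousAt hd.continuousAt (pow_ne_zero 2 hdx))
    exact this.continuousWithinAt
  have hU'int : IntegrableOn U' (Set.Ioi u) := by
    set C : ℝ := 1 + 6/(u^3+3*u)^2 with hC
    have hCint : IntegrableOn (fun x : ℝ => C * Real.exp (-x^2/2)) (Set.Ioi u) :=
      hexp_int.const_mul C
    refine hCint.mono' (hU'cont.aestronglyMeasurable measurableSet_Ioi) ?_
    rw [ae_restrict_iff' measurableSet_Ioi]
    refine Filter.Eventually.of_forall fun x hx => ?_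
    have hxu : u < x := hx
    have hdx : 0 < x^3 + 3*x := hden x hxu.le
    have hdu : 0 < u^3 + 3*u := hden u le_rfl
    have hratio : (x^6+6*x^4+9*x^2+6)/(x^3+3*x)^2 = 1 + 6/(x^3+3*x)^2 := by
      have : x ≠ 0 := (hu.trans hxu).ne'
      field_simp; ring
    have hle : 6/(x^3+3*x)^2 ≤ 6/(u^3+3*u)^2 := by
      have h1 : u^3 + 3*u ≤ x^3 + 3*x := by
        have := pow_le_pow_left₀ hu.le hxu.le 3
        linarith
      exact div_le_div_of_nonneg_left (by norm_num) (by positivity)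
        (pow_le_pow_left₀ hdu.le h1 2)
    rw [hU'def]
    simp only [norm_mul, Real.norm_eq_abs, abs_of_pos (Real.exp_pos _)]
    have hrpos : 0 < (x^6+6*x^4+9*x^2+6)/(x^3+3*x)^2 := by positivity
    rw [abs_of_pos hrpos, hratio]
    calc Real.exp (-x^2/2) * (1 + 6/(x^3+3*x)^2)
        ≤ Real.exp (-x^2/2) * C := by
          apply mul_le_mul_of_nonneg_left _ (Real.exp_pos _).le
          rw [hC]; linarith
      _ = C * Real.exp (-x^2/2) := mul_comm _ _
  have hUtend : Tendsto (fun x : ℝ => -((x^2+2)/(x^3+3*x)) * Real.exp (-x^2/2)) atTop (nhds 0) := by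
    refine tendsto_of_tendsto_of_tendsto_of_le_of_le'
      (g := fun x : ℝ => -Real.exp (-x^2/2)) (h := fun x : ℝ => Real.exp (-x^2/2))
      (by simpa using exp_tendsto0.neg) exp_tendsto0 ?_ ?_
    · filter_upwards [eventually_ge_atTop (1:ℝ)] with x hx
      have hx0 : (0:ℝ) < x := lt_of_lt_of_le one_pos hx
      have hdx : 0 < x^3 + 3*x := by positivity
      have hr : (x^2+2)/(x^3+3*x) ≤ 1 := by
        rw [div_le_one hdx]; nlinarith
      have := mul_le_mul_of_nonneg_right hr (Real.exp_pos (-x^2/2)).le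
      nlinarith
    · filter_upwards [eventually_ge_atTop (1:ℝ)] with x hx
      have hx0 : (0:ℝ) < x := lt_of_lt_of_le one_pos hx
      have hdx : 0 < x^3 + 3*x := by positivity
      have hr : 0 ≤ (x^2+2)/(x^3+3*x) := by positivity
      nlinarith [Real.exp_pos (-x^2/2)]
  have hUI : ∫ x in Set.Ioi u, U' x = (u^2+2)/(u^3+3*u) * Real.exp (-u^2/2) := by
    have h := integral_Ioi_of_hasDerivAt_of_tendsto
      (f := fun x : ℝ => -((x^2+2)/(x^3+3*x)) * Real.exp (-x^2/2)) (f' := U')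
      ((U_hasDeriv u hu.ne').continuousAt.continuousWithinAt)
      (fun x hx => U_hasDeriv x (by
        have : u < x := hx
        intro h0; rw [h0] at this; exact absurd this (not_lt.2 hu.le)))
      hU'int hUtend
    rw [h]; ring
  have hpos2 : 0 < ∫ x in Set.Ioi u, (U' x - Real.exp (-x^2/2)) := by
    rw [setIntegral_pos_iff_support_of_nonneg_ae]
    · have hsub : Set.Ioi u ⊆ Function.support (fun x : ℝ => U' x - Real.exp (-x^2/2)) ∩ Set.Ioi u := by
        intro x hx
        refine ⟨?_, hx⟩
        have hxu : u < x := hx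
        have hdx : 0 < x^3 + 3*x := hden x hxu.le
        simp only [Function.mem_support]
        have hkey : U' x - Real.exp (-x^2/2) = Real.exp (-x^2/2) * (6/(x^3+3*x)^2) := by
          rw [hU'def]
          have : x ≠ 0 := (hu.trans hxu).ne'
          field_simp
          ring
        rw [hkey]; positivity
      calc (0 : ENNReal) < volume (Set.Ioi u) := by rw [Real.volume_Ioi]; exact ENNReal.zero_lt_top
        _ ≤ volume (Function.support (fun x : ℝ => U' x - Real.exp (-x^2/2)) ∩ Set.Ioi u) :=
          measure_mono hsub
    · rw [Filter.EventuallyLE, ae_restrict_iff' measurableSet_Ioi]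
      refine Filter.Eventually.of_forall fun x hx => ?_
      have hxu : u < x := hx
      have hdx : (0:ℝ) < x^3 + 3*x := hden x hxu.le
      have hkey : U' x - Real.exp (-x^2/2) = Real.exp (-x^2/2) * (6/(x^3+3*x)^2) := by
        rw [hU'def]; have : x ≠ 0 := (hu.trans hxu).ne'; field_simp; ring
      show (0:ℝ) ≤ U' x - Real.exp (-x^2/2)
      rw [hkey]; positivity
    · exact hU'int.sub hexp_int
  rw [integral_sub hU'int hexp_int, hUI] at hpos2
  have hhigh : (∫ x in Set.Ioi u, Real.exp (-x ^ 2 / 2))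
      < ((u ^ 2 + 2) / (u ^ 2 + 3)) * (1 / u) * Real.exp (-u ^ 2 / 2) := by
    have he : ((u ^ 2 + 2) / (u ^ 2 + 3)) * (1 / u) = (u^2+2)/(u^3+3*u) := by
      rw [div_mul_div_comm, mul_one]
      congr 1
      ring
    rw [he]; linarith
  exact ⟨hlow, hhigh⟩
end

section
/- Suppose n is a positive integer, k a natural number with n ≤ 4k ≤ 3n, and set u = (n - 2k)/√n, LR = k!(n-k)!2^n/(n!(n+1)). Then there exist E₁ with 0 ≤ E₁ ≤ 1/n and E₂ with u²/(6n) - 4/(3n) ≤ E₂ ≤ 2u²/(9n) - 1/n such that (1+E₁)·LR = √(π/(2n))·exp((u²/2)(1+E₂)). -/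
set_option maxHeartbeats 1000000
open Real Stirling Nat Filter Topology Set

lemma my_diff_lb (m : ℕ) :
    (1:ℝ)/3 * ((1 / (2 * (m+1:ℝ) + 1)) ^ 2) ≤
      log (stirlingSeq (m + 1)) - log (stirlingSeq (m + 2)) := by
  have h := log_stirlingSeq_diff_hasSum m
  have := le_hasSum h 0 (fun j _ => by positivity)
  norm_num at this ⊢
  convert this using 2

lemma my_diff_ub (m : ℕ) :
    log (stirlingSeq (m + 1)) - log (stirlingSeq (m + 2)) ≤
      1/3 * (((1:ℝ) / (2 * (m+1:ℝ) + 1)) ^ 2 / (1 - ((1:ℝ) / (2 * (m+1:ℝ) + 1)) ^ 2)) := by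
  have hcast : ((↑(m+1):ℝ)) = (m+1:ℝ) := by push_cast; ring
  set q : ℝ := ((1:ℝ) / (2 * (↑(m+1):ℝ) + 1)) ^ 2 with hq
  have h_nonneg : (0:ℝ) ≤ q := sq_nonneg _
  have hqlt : q < 1 := by
    rw [hq, one_div, inv_pow]
    exact inv_lt_one_of_one_lt₀ (one_lt_pow₀ (by push_cast; nlinarith [Nat.cast_nonneg (α := ℝ) m]) two_ne_zero)
  have g : HasSum (fun k : ℕ => 1/3 * q ^ (k + 1)) (1/3 * (q / (1 - q))) := by
    have := (hasSum_geometric_of_lt_one h_nonneg hqlt).mul_left (1/3 * q)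
    have e1 : (fun k : ℕ => 1/3 * q ^ (k + 1)) = fun i => 1/3*q*q^i := by funext k; ring
    have e2 : (1/3 * (q / (1 - q))) = 1/3*q*(1-q)⁻¹ := by ring
    rw [e1, e2]; exact this
  have hab : ∀ k : ℕ, (1:ℝ) / (2 * (↑(k+1):ℝ) + 1) * q ^ (k + 1) ≤ 1/3 * q ^ (k + 1) := by
    intro k
    apply mul_le_mul_of_nonneg_right _ (pow_nonneg h_nonneg _)
    rw [div_le_div_iff₀ (by positivity) (by norm_num)]
    push_cast
    nlinarith [Nat.cast_nonneg (α := ℝ) k]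
  have := hasSum_le hab (log_stirlingSeq_diff_hasSum m) g
  rw [hq, hcast] at this
  exact this

lemma tendsto_log_stirling :
    Tendsto (fun j : ℕ => log (stirlingSeq (j+1))) atTop (𝓝 (log (√π))) :=
  (Real.continuousAt_log (by positivity)).tendsto.comp
    (tendsto_stirlingSeq_sqrt_pi.comp (tendsto_add_atTop_nat 1))

lemma tendsto_log_stirling' (m : ℕ) :
    Tendsto (fun j : ℕ => log (stirlingSeq (m+j+1))) atTop (𝓝 (log (√π))) := by
  have h := tendsto_log_stirling.comp (tendsto_add_atTop_nat m)
  apply h.congr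
  intro j
  simp only [Function.comp]
  congr 2
  omega

lemma my_step_lb (M : ℕ) :
    1/6 * (1/(2*(M:ℝ)+3)) - 1/6 * (1/(2*(M:ℝ)+5)) ≤
      log (stirlingSeq (M + 1)) - log (stirlingSeq (M + 2)) := by
  refine le_trans ?_ (my_diff_lb M)
  have hM : (0:ℝ) ≤ (M:ℝ) := Nat.cast_nonneg M
  have h1 : (0:ℝ) < 2*(M:ℝ)+3 := by positivity
  have h2 : (0:ℝ) < 2*(M:ℝ)+5 := by positivity
  have e : 1/6 * ((1:ℝ)/(2*(M:ℝ)+3)) - 1/6*(1/(2*(M:ℝ)+5)) = 1/(3*((2*(M:ℝ)+3)*(2*(M:ℝ)+5))) := by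
    field_simp
    ring
  have e2 : (1:ℝ)/3*((1:ℝ)/(2*((M:ℝ)+1)+1))^2 = 1/(3*((2*(M:ℝ)+3)*(2*(M:ℝ)+3))) := by
    field_simp
    ring
  rw [e, e2]
  apply one_div_le_one_div_of_le (by positivity)
  nlinarith

lemma my_step_ub (M : ℕ) :
    log (stirlingSeq (M + 1)) - log (stirlingSeq (M + 2)) ≤
      1/12 * (1/((M:ℝ)+1)) - 1/12 * (1/((M:ℝ)+2)) := by
  refine le_trans (my_diff_ub M) ?_
  have hM : (0:ℝ) ≤ (M:ℝ) := Nat.cast_nonneg M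
  have gen : ∀ a : ℝ, 1 < a → (1/a)^2/(1 - (1/a)^2) = 1/(a^2 - 1) := by
    intro a ha
    have h0 : a ≠ 0 := by linarith
    have h1 : a^2 - 1 ≠ 0 := by nlinarith
    field_simp
  rw [gen (2*((M:ℝ)+1)+1) (by linarith)]
  rw [show (2*((M:ℝ)+1)+1)^2 - 1 = 4*(((M:ℝ)+1)*((M:ℝ)+2)) by ring]
  have r1 : (1:ℝ)/12*(1/((M:ℝ)+1)) - 1/12*(1/((M:ℝ)+2)) = 1/(12*(((M:ℝ)+1)*((M:ℝ)+2))) := by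
    field_simp
    ring
  rw [r1, _root_.div_mul_div_comm]
  rw [show (3:ℝ)*(4*(((M:ℝ)+1)*((M:ℝ)+2))) = 12*(((M:ℝ)+1)*((M:ℝ)+2)) by ring, one_mul]

lemma log_stirling_lb (m : ℕ) :
    Real.log (√π) + 1/6 * (1/(2*(m:ℝ)+3)) ≤ Real.log (stirlingSeq (m+1)) := by
  have key : ∀ j : ℕ, log (stirlingSeq (m+j+1)) + 1/6 * (1/(2*(m:ℝ)+3)) - 1/6 * (1/(2*(↑(m+j):ℝ)+3))
      ≤ log (stirlingSeq (m+1)) := by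
    intro j
    induction j with
    | zero => simp
    | succ i ih =>
      have hs := my_step_lb (m+i)
      have e : m+(i+1)+1 = (m+i)+2 := by omega
      have e2 : m+(i+1) = (m+i)+1 := by omega
      rw [e, e2]
      push_cast at hs ih ⊢
      ring_nf at hs ih ⊢
      linarith
  have hc0 : Tendsto (fun j : ℕ => 1/6 * (1/(2*(↑(m+j):ℝ)+3))) atTop (𝓝 0) := by
    have h : Tendsto (fun j : ℕ => (2*(↑(m+j):ℝ)+3)) atTop atTop := by
      apply tendsto_atTop_mono (f := fun j : ℕ => (j:ℝ))
      · intro j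
        have : (j:ℝ) ≤ ((m+j:ℕ):ℝ) := by push_cast; linarith [Nat.cast_nonneg (α := ℝ) m]
        linarith
      · exact tendsto_natCast_atTop_atTop
    have := (tendsto_inv_atTop_zero.comp h).const_mul (1/6 : ℝ)
    simpa [one_div] using this
  have hlim : Tendsto (fun j : ℕ => log (stirlingSeq (m+j+1)) + 1/6 * (1/(2*(m:ℝ)+3)) - 1/6 * (1/(2*(↑(m+j):ℝ)+3)))
      atTop (𝓝 (log (√π) + 1/6 * (1/(2*(m:ℝ)+3)) - 0)) :=
    ((tendsto_log_stirling' m).add_const _).sub hc0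
  have := le_of_tendsto hlim (Filter.Eventually.of_forall key)
  linarith [this]

lemma log_stirling_ub (m : ℕ) :
    Real.log (stirlingSeq (m+1)) ≤ Real.log (√π) + 1/12 * (1/((m:ℝ)+1)) := by
  have key : ∀ j : ℕ, log (stirlingSeq (m+1)) ≤
      log (stirlingSeq (m+j+1)) + 1/12 * (1/((m:ℝ)+1)) - 1/12 * (1/((↑(m+j):ℝ)+1)) := by
    intro j
    induction j with
    | zero => simp
    | succ i ih =>
      have hs := my_step_ub (m+i)
      have e : m+(i+1)+1 = (m+i)+2 := by omega
      have e2 : m+(i+1) = (m+i)+1 := by omega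
      rw [e, e2]
      push_cast at hs ih ⊢
      ring_nf at hs ih ⊢
      linarith
  have hc0 : Tendsto (fun j : ℕ => 1/12 * (1/((↑(m+j):ℝ)+1))) atTop (𝓝 0) := by
    have h : Tendsto (fun j : ℕ => ((↑(m+j):ℝ)+1)) atTop atTop := by
      apply tendsto_atTop_mono (f := fun j : ℕ => (j:ℝ))
      · intro j
        have : (j:ℝ) ≤ ((m+j:ℕ):ℝ) := by push_cast; linarith [Nat.cast_nonneg (α := ℝ) m]
        linarith
      · exact tendsto_natCast_atTop_atTop
    have := (tendsto_inv_atTop_zero.comp h).const_mul (1/12 : ℝ)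
    simpa [one_div] using this
  have hlim : Tendsto (fun j : ℕ => log (stirlingSeq (m+j+1)) + 1/12 * (1/((m:ℝ)+1)) - 1/12 * (1/((↑(m+j):ℝ)+1)))
      atTop (𝓝 (log (√π) + 1/12 * (1/((m:ℝ)+1)) - 0)) :=
    ((tendsto_log_stirling' m).add_const _).sub hc0
  have := ge_of_tendsto hlim (Filter.Eventually.of_forall key)
  linarith [this]

lemma log_fact_formula (m : ℕ) (hm : 0 < m) :
    Real.log (m.factorial) = Real.log (stirlingSeq m) + 1/2*Real.log (2*(m:ℝ)) + (m:ℝ)*(Real.log m - 1) := by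
  have h := log_stirlingSeq_formula m
  have hm' : (0:ℝ) < (m:ℝ) := by exact_mod_cast hm
  have : Real.log ((m:ℝ) / Real.exp 1) = Real.log m - 1 := by
    rw [Real.log_div hm'.ne' (Real.exp_ne_zero 1), Real.log_exp]
  rw [this] at h
  linarith

lemma log_factorial_lb (m : ℕ) (hm : 0 < m) :
    Real.log (√π) + 1/2*Real.log (2*(m:ℝ)) + (m:ℝ)*(Real.log m - 1) + 1/6*(1/(2*(m:ℝ)+1))
      ≤ Real.log (m.factorial) := by
  obtain ⟨p, rfl⟩ : ∃ p, m = p + 1 := ⟨m - 1, by omega⟩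
  have h := log_stirling_lb p
  rw [log_fact_formula (p+1) (by omega)]
  push_cast at h ⊢
  ring_nf at h ⊢
  linarith

lemma log_factorial_ub (m : ℕ) (hm : 0 < m) :
    Real.log (m.factorial)
      ≤ Real.log (√π) + 1/2*Real.log (2*(m:ℝ)) + (m:ℝ)*(Real.log m - 1) + 1/12*(1/(m:ℝ)) := by
  obtain ⟨p, rfl⟩ : ∃ p, m = p + 1 := ⟨m - 1, by omega⟩
  have h := log_stirling_ub p
  rw [log_fact_formula (p+1) (by omega)]
  push_cast at h ⊢
  ring_nf at h ⊢
  linarith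

lemma mono_aux {f : ℝ → ℝ} {b : ℝ} (hb : 0 < b) (hc : ContinuousOn f (Set.Icc 0 b))
    (hd : ∀ x ∈ Set.Ioo (0:ℝ) b, ∃ d, HasDerivAt f d x ∧ 0 ≤ d)
    {x : ℝ} (hx : x ∈ Set.Icc 0 b) : f 0 ≤ f x := by
  have hmono := monotoneOn_of_deriv_nonneg (convex_Icc (0:ℝ) b) hc
    (fun y hy => by
      rw [interior_Icc] at hy
      obtain ⟨d, hdy, _⟩ := hd y hy
      exact hdy.differentiableAt.differentiableWithinAt)
    (fun y hy => by
      rw [interior_Icc] at hy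
      obtain ⟨d, hdy, hdn⟩ := hd y hy
      rw [hdy.deriv]; exact hdn)
  exact hmono (Set.left_mem_Icc.2 hb.le) hx hx.1

lemma hasDerivAt_log_one_add {x : ℝ} (h : (-1:ℝ) < x) :
    HasDerivAt (fun y : ℝ => Real.log (1+y)) ((1+x)⁻¹) x := by
  have h1 : (1:ℝ) + x ≠ 0 := by linarith
  have := (Real.hasDerivAt_log h1).comp x ((hasDerivAt_id x).const_add 1)
  simp at this
  exact this

lemma hasDerivAt_log_one_sub {x : ℝ} (h : x < 1) :
    HasDerivAt (fun y : ℝ => Real.log (1-y)) (-(1-x)⁻¹) x := by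
  have h1 : (1:ℝ) - x ≠ 0 := by linarith
  have := (Real.hasDerivAt_log h1).comp x ((hasDerivAt_id x).const_sub 1)
  simp at this
  exact this

lemma cont_log_one_add : ContinuousOn (fun y : ℝ => Real.log (1+y)) (Set.Icc 0 (1/2:ℝ)) := by
  apply ContinuousOn.log (by fun_prop)
  intro y hy
  simp only [Set.mem_Icc] at hy
  intro hcon
  linarith [hy.1]

lemma cont_log_one_sub : ContinuousOn (fun y : ℝ => Real.log (1-y)) (Set.Icc 0 (1/2:ℝ)) := by
  apply ContinuousOn.log (by fun_prop)
  intro y hy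
  simp only [Set.mem_Icc] at hy
  intro hcon
  linarith [hy.2]

lemma atanh_lb {x : ℝ} (h0 : 0 ≤ x) (h1 : x ≤ 1/2) :
    x + x^3/3 ≤ (Real.log (1+x) - Real.log (1-x))/2 := by
  set f : ℝ → ℝ := fun y => (Real.log (1+y) - Real.log (1-y))/2 - y - y^3/3 with hf
  have key : f 0 ≤ f x := by
    apply mono_aux (by norm_num : (0:ℝ) < 1/2)
    · apply ContinuousOn.sub
      apply ContinuousOn.sub
      · exact (cont_log_one_add.sub cont_log_one_sub).div_const 2
      · fun_prop
      · fun_prop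
    · intro y hy
      simp only [Set.mem_Ioo] at hy
      refine ⟨((1+y)⁻¹ - (-(1-y)⁻¹))/2 - 1 - 3*y^2/3, ?_, ?_⟩
      · exact (((hasDerivAt_log_one_add (by linarith)).sub
          (hasDerivAt_log_one_sub (by linarith))).div_const 2 |>.sub (hasDerivAt_id y)).sub
          ((hasDerivAt_pow 3 y).div_const 3)
      · have hy1 : (0:ℝ) < 1 + y := by linarith
        have hy2 : (0:ℝ) < 1 - y := by linarith
        have h3 : (0:ℝ) < 1 - y^2 := by nlinarith
        have e : ((1+y)⁻¹ - -(1-y)⁻¹)/2 - 1 - 3*y^2/3 = y^4/(1-y^2) := by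
          field_simp
          ring
        rw [e]
        positivity
    · exact ⟨h0, h1⟩
  have : f 0 = 0 := by simp [hf]
  rw [this] at key
  simp only [hf] at key
  linarith

lemma atanh_ub {x : ℝ} (h0 : 0 ≤ x) (h1 : x ≤ 1/2) :
    (Real.log (1+x) - Real.log (1-x))/2 ≤ x + (4/9)*x^3 := by
  set f : ℝ → ℝ := fun y => y + (4/9)*y^3 - (Real.log (1+y) - Real.log (1-y))/2 with hf
  have key : f 0 ≤ f x := by
    apply mono_aux (by norm_num : (0:ℝ) < 1/2)
    · apply ContinuousOn.sub
      · fun_prop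
      · exact (cont_log_one_add.sub cont_log_one_sub).div_const 2
    · intro y hy
      simp only [Set.mem_Ioo] at hy
      refine ⟨1 + (4/9)*(3*y^2) - ((1+y)⁻¹ - (-(1-y)⁻¹))/2, ?_, ?_⟩
      · exact ((hasDerivAt_id y).add (((hasDerivAt_pow 3 y)).const_mul (4/9:ℝ))).sub
          (((hasDerivAt_log_one_add (by linarith)).sub
            (hasDerivAt_log_one_sub (by linarith))).div_const 2)
      · have hy1 : (0:ℝ) < 1 + y := by linarith
        have hy2 : (0:ℝ) < 1 - y := by linarith
        have h3 : (0:ℝ) < 1 - y^2 := by nlinarith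
        have e : 1 + (4/9)*(3*y^2) - ((1+y)⁻¹ - (-(1-y)⁻¹))/2 = y^2*(1-4*y^2)/(3*(1-y^2)) := by
          field_simp
          ring
        rw [e]
        apply div_nonneg _ (by positivity)
        have h5 : y^2 ≤ 1/4 := by nlinarith
        nlinarith [sq_nonneg y]
    · exact ⟨h0, h1⟩
  have h00 : f 0 = 0 := by simp [hf]
  rw [h00] at key
  simp only [hf] at key
  linarith

lemma cont_phi : ContinuousOn (fun y : ℝ => ((1-y)*Real.log (1-y) + (1+y)*Real.log (1+y))/2)
    (Set.Icc 0 (1/2:ℝ)) := by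
  apply ContinuousOn.div_const
  apply ContinuousOn.add
  · exact (continuous_const.sub continuous_id).continuousOn.mul cont_log_one_sub
  · exact (continuous_const.add continuous_id).continuousOn.mul cont_log_one_add

lemma hasDerivAt_phi {y : ℝ} (h1 : -1 < y) (h2 : y < 1) :
    HasDerivAt (fun y : ℝ => ((1-y)*Real.log (1-y) + (1+y)*Real.log (1+y))/2)
      ((Real.log (1+y) - Real.log (1-y))/2) y := by
  have d1 : HasDerivAt (fun t : ℝ => (1-t)*Real.log (1-t))
      ((-1)*Real.log (1-y) + (1-y)*(-(1-y)⁻¹)) y :=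
    ((hasDerivAt_id y).const_sub 1).mul (hasDerivAt_log_one_sub h2)
  have d2 : HasDerivAt (fun t : ℝ => (1+t)*Real.log (1+t))
      (1*Real.log (1+y) + (1+y)*((1+y)⁻¹)) y :=
    ((hasDerivAt_id y).const_add 1).mul (hasDerivAt_log_one_add h1)
  have := (d1.add d2).div_const 2
  have e1 : (1-y) * (-(1-y)⁻¹) = -1 := by
    rw [mul_neg, mul_inv_cancel₀ (by linarith : (1:ℝ)-y ≠ 0)]
  have e2 : (1+y) * ((1+y)⁻¹) = 1 := mul_inv_cancel₀ (by linarith : (1:ℝ)+y ≠ 0)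
  have e3 : ((-1 * Real.log (1 - y) + (1 - y) * -(1 - y)⁻¹ + (1 * Real.log (1 + y) + (1 + y) * (1 + y)⁻¹)) / 2)
      = (Real.log (1+y) - Real.log (1-y))/2 := by rw [e1, e2]; ring
  rw [e3] at this
  exact this

lemma phi_lb0 {x : ℝ} (h0 : 0 ≤ x) (h1 : x ≤ 1/2) :
    x^2/2 + x^4/12 ≤ ((1-x)*Real.log (1-x) + (1+x)*Real.log (1+x))/2 := by
  set f : ℝ → ℝ := fun y => ((1-y)*Real.log (1-y) + (1+y)*Real.log (1+y))/2 - y^2/2 - y^4/12 with hf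
  have key : f 0 ≤ f x := by
    apply mono_aux (by norm_num : (0:ℝ) < 1/2)
    · exact (cont_phi.sub (by fun_prop)).sub (by fun_prop)
    · intro y hy
      simp only [Set.mem_Ioo] at hy
      refine ⟨_, ((hasDerivAt_phi (by linarith) (by linarith)).sub
          (((hasDerivAt_pow 2 y)).div_const 2)).sub ((hasDerivAt_pow 4 y).div_const 12), ?_⟩
      · have := atanh_lb hy.1.le hy.2.le
        push_cast
        nlinarith [this]
    · exact ⟨h0, h1⟩
  have h00 : f 0 = 0 := by simp [hf]
  rw [h00] at key
  simp only [hf] at key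
  linarith

lemma phi_ub0 {x : ℝ} (h0 : 0 ≤ x) (h1 : x ≤ 1/2) :
    ((1-x)*Real.log (1-x) + (1+x)*Real.log (1+x))/2 ≤ x^2/2 + x^4/9 := by
  set f : ℝ → ℝ := fun y => y^2/2 + y^4/9 - ((1-y)*Real.log (1-y) + (1+y)*Real.log (1+y))/2 with hf
  have key : f 0 ≤ f x := by
    apply mono_aux (by norm_num : (0:ℝ) < 1/2)
    · exact ContinuousOn.sub (by fun_prop) cont_phi
    · intro y hy
      simp only [Set.mem_Ioo] at hy
      refine ⟨_, (((hasDerivAt_pow 2 y).div_const 2).add ((hasDerivAt_pow 4 y).div_const 9)).sub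
          (hasDerivAt_phi (by linarith) (by linarith)), ?_⟩
      · have := atanh_ub hy.1.le hy.2.le
        push_cast
        nlinarith [this]
    · exact ⟨h0, h1⟩
  have h00 : f 0 = 0 := by simp [hf]
  rw [h00] at key
  simp only [hf] at key
  linarith

lemma phi_lb {x : ℝ} (h1 : |x| ≤ 1/2) :
    x^2/2 + x^4/12 ≤ ((1-x)*Real.log (1-x) + (1+x)*Real.log (1+x))/2 := by
  rcases le_total 0 x with h | h
  · exact phi_lb0 h (by rwa [abs_of_nonneg h] at h1)
  · have := phi_lb0 (x := -x) (by linarith) (by rwa [abs_of_nonpos h] at h1)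
    ring_nf at this ⊢
    linarith

lemma phi_ub {x : ℝ} (h1 : |x| ≤ 1/2) :
    ((1-x)*Real.log (1-x) + (1+x)*Real.log (1+x))/2 ≤ x^2/2 + x^4/9 := by
  rcases le_total 0 x with h | h
  · exact phi_ub0 h (by rwa [abs_of_nonneg h] at h1)
  · have := phi_ub0 (x := -x) (by linarith) (by rwa [abs_of_nonpos h] at h1)
    ring_nf at this ⊢
    linarith

lemma log1m_ub {y : ℝ} (h1 : y < 1) : Real.log (1-y) ≤ -y := by
  have := Real.log_le_sub_one_of_pos (x := 1-y) (by linarith)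
  linarith

lemma log1m_lb {y : ℝ} (h0 : 0 ≤ y) (h1 : y ≤ 1/4) : -y - (4/3)*y^2 ≤ Real.log (1-y) := by
  have h2 : (0:ℝ) < 1 - y := by linarith
  have h3 := Real.log_le_sub_one_of_pos (x := (1-y)⁻¹) (by positivity)
  rw [Real.log_inv] at h3
  have e : (1-y)⁻¹ - 1 = y/(1-y) := by field_simp; ring
  rw [e] at h3
  have h4 : y/(1-y) ≤ y + (4/3)*y^2 := by
    rw [div_le_iff₀ h2]
    nlinarith
  linarith

lemma log1p_lb {y : ℝ} (h0 : 0 ≤ y) : y/(1+y) ≤ Real.log (1+y) := by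
  have h2 : (0:ℝ) < 1 + y := by linarith
  have h3 := Real.log_le_sub_one_of_pos (x := (1+y)⁻¹) (by positivity)
  rw [Real.log_inv] at h3
  have e : (1+y)⁻¹ - 1 = -(y/(1+y)) := by field_simp; ring
  rw [e] at h3
  linarith

section main
variable {N K B LK LB LN x : ℝ}
  (hN : 2 ≤ N) (hK : 1 ≤ K) (hB : 1 ≤ B) (hsum : K + B = N)
  (h4K : N ≤ 4*K) (h4B : N ≤ 4*B) (hxd : x = (N - 2*K)/N)

include hN hK hB hsum h4K h4B hxd

lemma basic_facts :
    0 < N ∧ 0 < K ∧ 0 < B ∧ |x| ≤ 1/2 ∧ x^2 ≤ 1/4 ∧ 0 < 1-x ∧ 0 < 1+x ∧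
      K = N*(1-x)/2 ∧ B = N*(1+x)/2 := by
  have hN0 : (0:ℝ) < N := by linarith
  have hK0 : (0:ℝ) < K := by linarith
  have hB0 : (0:ℝ) < B := by linarith
  have hxabs : |x| ≤ 1/2 := by
    rw [abs_le, hxd]
    constructor
    · rw [le_div_iff₀ hN0]; linarith
    · rw [div_le_iff₀ hN0]; linarith
  have h2 := abs_le.mp hxabs
  have hx2 : x^2 ≤ 1/4 := by nlinarith
  refine ⟨hN0, hK0, hB0, hxabs, hx2, by linarith, by linarith, ?_, ?_⟩
  · rw [hxd]; field_simp
    try ring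
    try linarith
  · rw [hxd]; field_simp
    try ring
    try linarith

lemma log_relations (hN0 : 0 < N) (hK0 : 0 < K) (hB0 : 0 < B)
    (h1m : 0 < 1-x) (h1p : 0 < 1+x)
    (hKx : K = N*(1-x)/2) (hBx : B = N*(1+x)/2) :
    Real.log (2*K) = Real.log N + Real.log (1-x) ∧
    Real.log (2*B) = Real.log N + Real.log (1+x) ∧
    Real.log (2*N) = Real.log 2 + Real.log N ∧
    Real.log (Real.sqrt (π/(2*N))) = Real.log (Real.sqrt π) - (Real.log 2 + Real.log N)/2 ∧
    Real.log (1-x) + Real.log (1+x) = Real.log (1-x^2) ∧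
    K*Real.log K = K*Real.log N - K*Real.log 2 + K*Real.log (1-x) ∧
    B*Real.log B = B*Real.log N - B*Real.log 2 + B*Real.log (1+x) ∧
    Real.log (1+1/N) = Real.log (N+1) - Real.log N := by
  have rK : Real.log K = Real.log N - Real.log 2 + Real.log (1-x) := by
    rw [hKx, Real.log_div (by positivity) two_ne_zero, Real.log_mul hN0.ne' h1m.ne']
    ring
  have rB : Real.log B = Real.log N - Real.log 2 + Real.log (1+x) := by
    rw [hBx, Real.log_div (by positivity) two_ne_zero, Real.log_mul hN0.ne' h1p.ne']
    ring
  refine ⟨?_, ?_, ?_, ?_, ?_, ?_, ?_, ?_⟩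
  · rw [Real.log_mul two_ne_zero hK0.ne', rK]; ring
  · rw [Real.log_mul two_ne_zero hB0.ne', rB]; ring
  · rw [Real.log_mul two_ne_zero hN0.ne']
  · rw [Real.log_sqrt (by positivity), Real.log_sqrt Real.pi_pos.le,
      Real.log_div Real.pi_pos.ne' (by positivity), Real.log_mul two_ne_zero hN0.ne']
    ring
  · rw [← Real.log_mul h1m.ne' h1p.ne']
    congr 1
    ring
  · rw [rK]; ring
  · rw [rB]; ring
  · rw [show (1:ℝ)+1/N = (N+1)/N by field_simp, Real.log_div (by positivity) hN0.ne']

lemma main_A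
    (hLKub : LK ≤ Real.log (Real.sqrt π) + 1/2*Real.log (2*K) + K*(Real.log K - 1) + 1/12*(1/K))
    (hLBub : LB ≤ Real.log (Real.sqrt π) + 1/2*Real.log (2*B) + B*(Real.log B - 1) + 1/12*(1/B))
    (hLNlb : Real.log (Real.sqrt π) + 1/2*Real.log (2*N) + N*(Real.log N - 1) ≤ LN) :
    LK + LB + N*Real.log 2 - LN - Real.log (N+1)
      ≤ Real.log (Real.sqrt (π/(2*N))) + (N*x^2/2 + N*x^4/9 - x^2/2) := by
  obtain ⟨hN0, hK0, hB0, hxabs, hx2, h1m, h1p, hKx, hBx⟩ :=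
    basic_facts hN hK hB hsum h4K h4B hxd
  obtain ⟨g1, g2, g3, g4, g5, g6, g7, g10⟩ :=
    log_relations hN hK hB hsum h4K h4B hxd hN0 hK0 hB0 h1m h1p hKx hBx
  have g8 : K*Real.log N + B*Real.log N = N*Real.log N := by rw [← hsum]; ring
  have g9 : K*Real.log 2 + B*Real.log 2 = N*Real.log 2 := by rw [← hsum]; ring
  have F1 : K*Real.log (1-x) + B*Real.log (1+x) ≤ N*x^2/2 + N*x^4/9 := by
    have h := phi_ub hxabs
    have h2 := mul_le_mul_of_nonneg_left h hN0.le
    have e : K*Real.log (1-x) + B*Real.log (1+x)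
        = N*(((1-x)*Real.log (1-x) + (1+x)*Real.log (1+x))/2) := by
      rw [hKx, hBx]; ring
    rw [e]
    nlinarith [h2]
  have F4 : Real.log (1-x^2) ≤ -x^2 := log1m_ub (by nlinarith)
  have F6 : 1/12*(1/K) + 1/12*(1/B) ≤ Real.log (N+1) - Real.log N := by
    have hlog : 1/(N+1) ≤ Real.log (1+1/N) := by
      have := log1p_lb (y := 1/N) (by positivity)
      have e : (1/N)/(1+1/N) = 1/(N+1) := by
        field_simp
      rw [e] at this
      exact this
    rw [← g10]
    refine le_trans ?_ hlog
    have hKB : 3*N^2 ≤ 16*(K*B) := by nlinarith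
    have e : 1/12*(1/K) + 1/12*(1/B) = N/(12*(K*B)) := by
      field_simp
      nlinarith [hsum]
    rw [e, div_le_div_iff₀ (by positivity) (by positivity)]
    nlinarith
  linarith [F1, F4, F6, hLKub, hLBub, hLNlb]

lemma main_B
    (hLKlb : Real.log (Real.sqrt π) + 1/2*Real.log (2*K) + K*(Real.log K - 1) + 1/6*(1/(2*K+1)) ≤ LK)
    (hLBlb : Real.log (Real.sqrt π) + 1/2*Real.log (2*B) + B*(Real.log B - 1) + 1/6*(1/(2*B+1)) ≤ LB)
    (hLNub : LN ≤ Real.log (Real.sqrt π) + 1/2*Real.log (2*N) + N*(Real.log N - 1) + 1/12*(1/N)) :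
    Real.log (Real.sqrt (π/(2*N))) + (N*x^2/2 + N*x^4/12 - 2*x^2/3)
      ≤ LK + LB + N*Real.log 2 - LN - Real.log (N+1) + Real.log (1+1/N) := by
  obtain ⟨hN0, hK0, hB0, hxabs, hx2, h1m, h1p, hKx, hBx⟩ :=
    basic_facts hN hK hB hsum h4K h4B hxd
  obtain ⟨g1, g2, g3, g4, g5, g6, g7, g10⟩ :=
    log_relations hN hK hB hsum h4K h4B hxd hN0 hK0 hB0 h1m h1p hKx hBx
  have g8 : K*Real.log N + B*Real.log N = N*Real.log N := by rw [← hsum]; ring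
  have g9 : K*Real.log 2 + B*Real.log 2 = N*Real.log 2 := by rw [← hsum]; ring
  have F2 : N*x^2/2 + N*x^4/12 ≤ K*Real.log (1-x) + B*Real.log (1+x) := by
    have h := phi_lb hxabs
    have h2 := mul_le_mul_of_nonneg_left h hN0.le
    have e : K*Real.log (1-x) + B*Real.log (1+x)
        = N*(((1-x)*Real.log (1-x) + (1+x)*Real.log (1+x))/2) := by
      rw [hKx, hBx]; ring
    rw [e]
    nlinarith [h2]
  have F5 : -x^2 - (4/3)*x^4 ≤ Real.log (1-x^2) := by
    have := log1m_lb (y := x^2) (sq_nonneg x) hx2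
    nlinarith [this]
  have F7a : (2/3)*x^4 ≤ x^2/6 := by nlinarith [sq_nonneg x]
  have F7b : 1/12*(1/N) ≤ 1/6*(1/(2*K+1)) + 1/6*(1/(2*B+1)) := by
    have hK2 : 2*K+1 ≤ 2*N := by linarith
    have h1 : 1/(2*N) ≤ 1/(2*K+1) := by
      apply one_div_le_one_div_of_le (by linarith) hK2
    have h2 : (0:ℝ) < 1/(2*B+1) := by positivity
    have e : 1/12*(1/N) = 1/6*(1/(2*N)) := by
      field_simp
      ring
    rw [e]
    nlinarith [h1, h2]
  linarith [F2, F5, F7a, F7b, hLKlb, hLBlb, hLNub]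

end main

theorem stmt_7 (n k : ℕ) (hn : 0 < n) (h1 : n ≤ 4 * k) (h2 : 4 * k ≤ 3 * n) :
    ∃ E₁ E₂ : ℝ,
      0 ≤ E₁ ∧ E₁ ≤ 1 / n ∧
      (((n : ℝ) - 2 * k) / Real.sqrt n) ^ 2 / (6 * n) - 4 / (3 * n) ≤ E₂ ∧
      E₂ ≤ 2 * (((n : ℝ) - 2 * k) / Real.sqrt n) ^ 2 / (9 * n) - 1 / n ∧
      (1 + E₁) *
          ((k.factorial : ℝ) * (n - k).factorial * 2 ^ n
            / ((n.factorial : ℝ) * (n + 1)))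
        = Real.sqrt (Real.pi / (2 * n)) *
            Real.exp ((((n : ℝ) - 2 * k) / Real.sqrt n) ^ 2 / 2 * (1 + E₂)) := by
  have hn2 : 2 ≤ n := by omega
  have hk1 : 1 ≤ k := by omega
  have hkn : k ≤ n := by omega
  have hnk1 : 1 ≤ n - k := by omega
  have hN : (2:ℝ) ≤ (n:ℝ) := by exact_mod_cast hn2
  have hN0 : (0:ℝ) < (n:ℝ) := by linarith
  have hK : (1:ℝ) ≤ (k:ℝ) := by exact_mod_cast hk1
  have hB : (1:ℝ) ≤ ((n-k:ℕ):ℝ) := by exact_mod_cast hnk1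
  have hsum : (k:ℝ) + ((n-k:ℕ):ℝ) = (n:ℝ) := by push_cast [hkn]; ring
  have h4K : (n:ℝ) ≤ 4*(k:ℝ) := by exact_mod_cast h1
  have h4B : (n:ℝ) ≤ 4*((n-k:ℕ):ℝ) := by
    have : n ≤ 4*(n-k) := by omega
    exact_mod_cast this
  set x : ℝ := ((n:ℝ) - 2*(k:ℝ))/(n:ℝ) with hxd
  set u : ℝ := ((n:ℝ) - 2*(k:ℝ))/Real.sqrt (n:ℝ) with hudef
  have hu2 : u^2 = (n:ℝ)*x^2 := by
    rw [hudef, hxd, div_pow, div_pow, Real.sq_sqrt hN0.le]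
    field_simp
  have hLNlb : Real.log (Real.sqrt π) + 1/2*Real.log (2*(n:ℝ)) + (n:ℝ)*(Real.log (n:ℝ) - 1)
      ≤ Real.log (n.factorial : ℝ) := by
    have h := log_factorial_lb n (by omega)
    have hpos : (0:ℝ) ≤ 1/6*(1/(2*(n:ℝ)+1)) := by positivity
    linarith
  have hA := main_A hN hK hB hsum h4K h4B hxd
    (log_factorial_ub k (by omega)) (log_factorial_ub (n-k) (by omega)) hLNlb
  have hBineq := main_B hN hK hB hsum h4K h4B hxd
    (log_factorial_lb k (by omega)) (log_factorial_lb (n-k) (by omega))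
    (log_factorial_ub n (by omega))
  set LR : ℝ := (k.factorial : ℝ) * ((n - k).factorial : ℝ) * 2 ^ n
      / ((n.factorial : ℝ) * ((n:ℝ) + 1)) with hLRdef
  have hfk : (0:ℝ) < (k.factorial : ℝ) := by exact_mod_cast k.factorial_pos
  have hfb : (0:ℝ) < ((n-k).factorial : ℝ) := by exact_mod_cast (n-k).factorial_pos
  have hfn : (0:ℝ) < (n.factorial : ℝ) := by exact_mod_cast n.factorial_pos
  have hLRpos : 0 < LR := by rw [hLRdef]; positivity
  have hlogLR : Real.log LR = Real.log (k.factorial : ℝ) + Real.log ((n-k).factorial : ℝ)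
      + (n:ℝ)*Real.log 2 - Real.log (n.factorial : ℝ) - Real.log ((n:ℝ)+1) := by
    rw [hLRdef, Real.log_div (by positivity) (by positivity),
      Real.log_mul (by positivity) (by positivity),
      Real.log_mul (by positivity) (by positivity),
      Real.log_mul (by positivity) (by positivity),
      Real.log_pow]
    push_cast
    ring
  have hsqpos : 0 < Real.sqrt (π/(2*(n:ℝ))) := Real.sqrt_pos.mpr (by positivity)
  set E₂lo : ℝ := u ^ 2 / (6 * (n:ℝ)) - 4 / (3 * (n:ℝ)) with hE2lo
  set E₂hi : ℝ := 2 * u ^ 2 / (9 * (n:ℝ)) - 1 / (n:ℝ) with hE2hi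
  have heq_hi : u^2/2 * (1+E₂hi) = (n:ℝ)*x^2/2 + (n:ℝ)*x^4/9 - x^2/2 := by
    rw [hE2hi, hu2]
    field_simp
    ring
  have heq_lo : u^2/2 * (1+E₂lo) = (n:ℝ)*x^2/2 + (n:ℝ)*x^4/12 - 2*x^2/3 := by
    rw [hE2lo, hu2]
    field_simp
    ring
  have hlog_rhs_hi : Real.log (Real.sqrt (π/(2*(n:ℝ))) * Real.exp (u^2/2*(1+E₂hi)))
      = Real.log (Real.sqrt (π/(2*(n:ℝ)))) + u^2/2*(1+E₂hi) := by
    rw [Real.log_mul hsqpos.ne' (Real.exp_ne_zero _), Real.log_exp]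
  have hlog_rhs_lo : Real.log (Real.sqrt (π/(2*(n:ℝ))) * Real.exp (u^2/2*(1+E₂lo)))
      = Real.log (Real.sqrt (π/(2*(n:ℝ)))) + u^2/2*(1+E₂lo) := by
    rw [Real.log_mul hsqpos.ne' (Real.exp_ne_zero _), Real.log_exp]
  have hA_exp : LR ≤ Real.sqrt (π/(2*(n:ℝ))) * Real.exp (u^2/2*(1+E₂hi)) := by
    rw [← Real.log_le_log_iff hLRpos (by positivity)]
    rw [hlog_rhs_hi, hlogLR, heq_hi]
    exact hA
  have hB_exp : Real.sqrt (π/(2*(n:ℝ))) * Real.exp (u^2/2*(1+E₂lo)) ≤ LR * (1+1/(n:ℝ)) := by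
    rw [← Real.log_le_log_iff (by positivity) (by positivity)]
    rw [hlog_rhs_lo, Real.log_mul hLRpos.ne' (by positivity), hlogLR, heq_lo]
    exact hBineq
  clear_value x u LR E₂lo E₂hi
  by_cases hc : LR ≤ Real.sqrt (π/(2*(n:ℝ))) * Real.exp (u^2/2*(1+E₂lo))
  · refine ⟨Real.sqrt (π/(2*(n:ℝ))) * Real.exp (u^2/2*(1+E₂lo)) / LR - 1, E₂lo, ?_, ?_, ?_, ?_, ?_⟩
    · have : (1:ℝ) ≤ Real.sqrt (π/(2*(n:ℝ))) * Real.exp (u^2/2*(1+E₂lo)) / LR :=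
        (one_le_div hLRpos).mpr hc
      linarith
    · have : Real.sqrt (π/(2*(n:ℝ))) * Real.exp (u^2/2*(1+E₂lo)) / LR ≤ 1 + 1/(n:ℝ) := by
        rw [div_le_iff₀ hLRpos]
        linarith [hB_exp]
      linarith
    · exact le_refl _
    · rw [hE2lo, hE2hi]
      have h0 : (0:ℝ) ≤ u^2/(n:ℝ) := by positivity
      have h1 : (0:ℝ) < 1/(n:ℝ) := by positivity
      have e3 : u^2/(6*(n:ℝ)) = (u^2/(n:ℝ))/6 := by ring
      have e4 : 2*u^2/(9*(n:ℝ)) = 2*(u^2/(n:ℝ))/9 := by ring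
      have e5 : (4:ℝ)/(3*(n:ℝ)) = (4/3)*(1/(n:ℝ)) := by ring
      rw [e3, e4, e5]
      linarith
    · field_simp
      ring
  · push_neg at hc
    have hu2pos : 0 < u^2 := by
      rcases (sq_nonneg u).eq_or_lt with h | h
      · exfalso
        rw [← h] at hA_exp hc
        norm_num at hA_exp hc
        linarith
      · exact h
    set L : ℝ := Real.log (LR / Real.sqrt (π/(2*(n:ℝ)))) with hLdef
    have hLval : L = Real.log LR - Real.log (Real.sqrt (π/(2*(n:ℝ)))) :=
      Real.log_div hLRpos.ne' hsqpos.ne'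
    clear_value L
    refine ⟨0, 2*L/u^2 - 1, le_refl _, by positivity, ?_, ?_, ?_⟩
    · have hlt : Real.log (Real.sqrt (π/(2*(n:ℝ)))) + u^2/2*(1+E₂lo) < Real.log LR := by
        rw [← hlog_rhs_lo]
        exact Real.log_lt_log (by positivity) hc
      have h2 : u^2/2*(1+E₂lo) ≤ L := by rw [hLval]; linarith
      have h3 : (1+E₂lo) ≤ 2*L/u^2 := by
        rw [le_div_iff₀ hu2pos]
        nlinarith [h2]
      linarith
    · have hle : Real.log LR ≤ Real.log (Real.sqrt (π/(2*(n:ℝ)))) + u^2/2*(1+E₂hi) := by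
        rw [← hlog_rhs_hi]
        exact Real.log_le_log hLRpos hA_exp
      have h2 : L ≤ u^2/2*(1+E₂hi) := by rw [hLval]; linarith
      have h3 : 2*L/u^2 ≤ (1+E₂hi) := by
        rw [div_le_iff₀ hu2pos]
        nlinarith [h2]
      linarith
    · have earg : u^2/2 * (1 + (2*L/u^2 - 1)) = L := by
        field_simp
        rw [add_sub_cancel, mul_div_assoc', mul_comm, mul_div_assoc, div_self hu2pos.ne', mul_one]
      rw [earg, hLdef, Real.exp_log (by positivity)]
      field_simp
      ring
end

section
/- Let p₀ ∈ (0,1), q₀ = 1 - p₀, n a positive integer, σ = √(p₀q₀n), and let u, y be reals with |u| ≤ σ, 0 < y, and z = y/σ satisfying 0 < z < 1/q₀ and p₀ - p₀q₀z ∈ (0,1). Set k = p₀n - uσ (assumed to be a nonnegative integer ≤ n). Then the log-likelihood-ratio ln LR_x = (p₀n - uσ)·ln(1 - q₀z) + (q₀n + uσ)·ln(1 + p₀z) satisfies ln LR_x ≤ -(1/2)p₀q₀y² + uy. -/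
open Real

lemma log_one_sub_le_aux (t : ℝ) (ht0 : 0 ≤ t) (ht1 : t < 1) :
    Real.log (1 - t) ≤ -t - t ^ 2 / 2 := by
  have key : MonotoneOn (fun s : ℝ => -s - s ^ 2 / 2 - Real.log (1 - s)) (Set.Ico 0 1) := by
    have hderiv : ∀ x ∈ Set.Ioo (0 : ℝ) 1,
        HasDerivAt (fun s : ℝ => -s - s ^ 2 / 2 - Real.log (1 - s))
          (-1 - x + 1 / (1 - x)) x := by
      intro x hx
      have hx1 : (1 : ℝ) - x ≠ 0 := by have := hx.2; intro h; linarith [hx.2]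
      have h1 : HasDerivAt (fun s : ℝ => 1 - s) (-1) x := by
        simpa using (hasDerivAt_id x).const_sub 1
      have h2 : HasDerivAt (fun s : ℝ => Real.log (1 - s)) ((1 - x)⁻¹ * (-1)) x :=
        (Real.hasDerivAt_log hx1).comp x h1
      have h3 : HasDerivAt (fun s : ℝ => -s - s ^ 2 / 2) (-1 - x) x := by
        have ha : HasDerivAt (fun s : ℝ => -s) (-1) x := by
          exact (hasDerivAt_id' x).neg
        have hb : HasDerivAt (fun s : ℝ => s ^ 2 / 2) x x := by
          have := (hasDerivAt_pow 2 x).div_const 2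
          simpa using this
        exact ha.sub hb
      have := h3.sub h2
      exact this.congr_deriv (by ring)
    apply monotoneOn_of_deriv_nonneg (convex_Ico 0 1)
    · apply ContinuousOn.sub
      · fun_prop
      · apply ContinuousOn.log (by fun_prop)
        intro x hx
        simp only [Set.mem_Ico] at hx
        intro h; linarith [hx.2]
    · intro x hx
      rw [interior_Ico] at hx
      exact (hderiv x hx).differentiableAt.differentiableWithinAt
    · intro x hx
      rw [interior_Ico] at hx
      rw [(hderiv x hx).deriv]
      have h1 : 0 < 1 - x := by linarith [hx.2]
      have heq : -1 - x + 1 / (1 - x) = x ^ 2 / (1 - x) := by field_simp; ring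
      rw [heq]
      positivity
  have h0 : (0 : ℝ) ∈ Set.Ico (0 : ℝ) 1 := by constructor <;> norm_num
  have ht : t ∈ Set.Ico (0 : ℝ) 1 := ⟨ht0, ht1⟩
  have := key h0 ht ht0
  simp at this
  linarith [this]

set_option maxHeartbeats 1000000 in
theorem stmt_10 (p₀ : ℝ) (hp : p₀ ∈ Set.Ioo (0 : ℝ) 1) (n : ℕ) (hn : 0 < n)
    (u y σ z : ℝ)
    (hσ : σ = Real.sqrt (p₀ * (1 - p₀) * n))
    (hu : |u| ≤ σ) (hy : 0 < y) (hz : z = y / σ)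
    (hz1 : z < 1 / (1 - p₀))
    (hpz : p₀ - p₀ * (1 - p₀) * z ∈ Set.Ioo (0 : ℝ) 1)
    (hk0 : 0 ≤ p₀ * n - u * σ) (hkn : p₀ * n - u * σ ≤ n) :
    (p₀ * n - u * σ) * Real.log (1 - (1 - p₀) * z)
        + ((1 - p₀) * n + u * σ) * Real.log (1 + p₀ * z)
      ≤ -(1 / 2) * p₀ * (1 - p₀) * y ^ 2 + u * y := by
  obtain ⟨hp0, hp1⟩ := hp
  have hq : 0 < 1 - p₀ := by linarith
  have hnR : (0 : ℝ) < n := by exact_mod_cast hn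
  have hσpos : 0 < σ := by
    rw [hσ]; exact Real.sqrt_pos.2 (mul_pos (mul_pos hp0 hq) hnR)
  have hσ2 : σ ^ 2 = p₀ * (1 - p₀) * n := by
    rw [hσ, sq]; exact Real.mul_self_sqrt (mul_pos (mul_pos hp0 hq) hnR).le
  have hzpos : 0 < z := by rw [hz]; exact div_pos hy hσpos
  have hzσ : z * σ = y := by rw [hz]; field_simp
  have hqz1 : (1 - p₀) * z < 1 := by
    rw [lt_div_iff₀ hq] at hz1; linarith [hz1]
  have hlog1 : Real.log (1 - (1 - p₀) * z) ≤
      -((1 - p₀) * z) - ((1 - p₀) * z) ^ 2 / 2 :=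
    log_one_sub_le_aux _ (by positivity) hqz1
  have hlog2 : Real.log (1 + p₀ * z) ≤ p₀ * z := by
    have := Real.log_le_sub_one_of_pos (show (0:ℝ) < 1 + p₀ * z by positivity)
    linarith
  have huσ : u * σ ≤ σ ^ 2 := by
    have : u ≤ σ := le_trans (le_abs_self u) hu
    nlinarith
  have huσ' : -(σ ^ 2) ≤ u * σ := by
    have : -σ ≤ u := by have := neg_abs_le u; linarith [abs_le.mp (le_refl |u|)]
    nlinarith
  have hB : 0 ≤ (1 - p₀) * n + u * σ := by nlinarith
  have step1 : (p₀ * n - u * σ) * Real.log (1 - (1 - p₀) * z)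
      ≤ (p₀ * n - u * σ) * (-((1 - p₀) * z) - ((1 - p₀) * z) ^ 2 / 2) :=
    mul_le_mul_of_nonneg_left hlog1 hk0
  have step2 : ((1 - p₀) * n + u * σ) * Real.log (1 + p₀ * z)
      ≤ ((1 - p₀) * n + u * σ) * (p₀ * z) :=
    mul_le_mul_of_nonneg_left hlog2 hB
  have hzsq : z ^ 2 * σ ^ 2 = y ^ 2 := by nlinarith [hzσ]
  have e1 : u * y = u * z * σ := by rw [← hzσ]; ring
  have e2 : y ^ 2 = z ^ 2 * (p₀ * (1 - p₀) * n) := by rw [← hzsq, hσ2]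
  have h1 : u * σ * ((1 - p₀) ^ 2 * z ^ 2) ≤ σ ^ 2 * ((1 - p₀) ^ 2 * z ^ 2) :=
    mul_le_mul_of_nonneg_right huσ (by positivity)
  have mid : (p₀ * n - u * σ) * (-((1 - p₀) * z) - ((1 - p₀) * z) ^ 2 / 2)
      + ((1 - p₀) * n + u * σ) * (p₀ * z)
      ≤ -(1 / 2) * p₀ * (1 - p₀) * y ^ 2 + u * y := by
    rw [e1, e2]
    nlinarith [h1, hσ2]
  linarith [step1, step2, mid]
end

section
/- Let p₀ ∈ (0,1), q₀ = 1-p₀, σ = √(p₀q₀n), k = p₀n - uσ. For fixed bounded u and y = u + x, with z = y/σ, the log-likelihood-ratio ln LR_x = (p₀n - uσ)ln(1 - q₀z) + (q₀n + uσ)ln(1 + p₀z) equals uy - y²/2 + (q₀ - p₀)·(y²/σ)·(u/2 - y/3) + O(1/n) as n → ∞. -/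
open Real Filter
set_option maxHeartbeats 4000000

lemma key_alg (p q u y n s : ℝ) (hp : p ≠ 0) (hq : q ≠ 0) (hs : s ≠ 0)
    (hpq : q = 1 - p) (hn : n = s^2/(p*q)) :
    (p*n - u*s) * (-(q*(y/s)) - (q*(y/s))^2/2 - (q*(y/s))^3/3)
      + (q*n + u*s) * ((p*(y/s)) - (p*(y/s))^2/2 + (p*(y/s))^3/3)
      - (u*y - y^2/2 + (q - p)*(y^2/s)*(u/2 - y/3))
    = u*y^3*(q^3+p^3)/(3*(p*q))/n := by
  subst hn hpq; field_simp; ring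

lemma log_taylor3 (x : ℝ) (hx : |x| ≤ 1/2) :
    |Real.log (1-x) + (x + x^2/2 + x^3/3)| ≤ 2*|x|^4 := by
  have h1 : |x| < 1 := lt_of_le_of_lt hx (by norm_num)
  have h := Real.abs_log_sub_add_sum_range_le h1 3
  simp [Finset.sum_range_succ] at h
  have h2 : |x|^4 / (1 - |x|) ≤ 2*|x|^4 := by
    rw [div_le_iff₀ (by linarith)]
    nlinarith [pow_nonneg (abs_nonneg x) 4]
  calc |Real.log (1-x) + (x + x^2/2 + x^3/3)|
      = |x + x^2/2 + x^3/3 + Real.log (1-x)| := by ring_nf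
    _ ≤ |x|^4 / (1-|x|) := by convert h using 3; ring
    _ ≤ 2*|x|^4 := h2

theorem stmt_11 (p₀ u y : ℝ) (hp : p₀ ∈ Set.Ioo (0 : ℝ) 1) :
    (fun n : ℕ =>
        (p₀ * n - u * Real.sqrt (p₀ * (1 - p₀) * n)) *
            Real.log (1 - (1 - p₀) * (y / Real.sqrt (p₀ * (1 - p₀) * n)))
          + ((1 - p₀) * n + u * Real.sqrt (p₀ * (1 - p₀) * n)) *
            Real.log (1 + p₀ * (y / Real.sqrt (p₀ * (1 - p₀) * n)))
          - (u * y - y ^ 2 / 2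
              + ((1 - p₀) - p₀) * (y ^ 2 / Real.sqrt (p₀ * (1 - p₀) * n))
                * (u / 2 - y / 3)))
      =O[atTop] fun n : ℕ => (1 : ℝ) / n := by
  obtain ⟨hp0, hp1⟩ := hp
  have hq0 : (0:ℝ) < 1 - p₀ := by linarith
  obtain ⟨q, hqdef⟩ : ∃ q : ℝ, q = 1 - p₀ := ⟨_, rfl⟩
  simp only [← hqdef]
  rw [← hqdef] at hq0
  have hq1 : q ≤ 1 := by rw [hqdef]; linarith
  rw [Asymptotics.isBigO_iff]
  refine ⟨|u*y^3*(q^3+p₀^3)/(3*(p₀*q))| + 4*(1+|u|)*y^4/(p₀*q)^2, ?_⟩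
  filter_upwards [eventually_ge_atTop 1, eventually_ge_atTop ⌈4*y^2/(p₀*q)⌉₊]
    with n hn1 hn2
  have hn1' : (1:ℝ) ≤ (n:ℕ) := by exact_mod_cast hn1
  have hnpos : (0:ℝ) < (n:ℝ) := by linarith
  have hy2 : 4*y^2/(p₀*q) ≤ (n:ℝ) := Nat.ceil_le.mp hn2
  have hy2' : 4*y^2 ≤ p₀*q*(n:ℝ) := by
    rw [div_le_iff₀ (by positivity)] at hy2; linarith [mul_comm ((n:ℝ)) (p₀*q)]
  obtain ⟨s, hsdef⟩ : ∃ s : ℝ, s = Real.sqrt (p₀*q*(n:ℝ)) := ⟨_, rfl⟩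
  simp only [show Real.sqrt (p₀ * q * (n:ℝ)) = s from hsdef.symm]
  have hs2 : s^2 = p₀*q*(n:ℝ) := by rw [hsdef]; exact Real.sq_sqrt (by positivity)
  have hspos : 0 < s := by rw [hsdef]; exact Real.sqrt_pos.mpr (by positivity)
  have hsy : 2*|y| ≤ s := by nlinarith [sq_abs y, abs_nonneg y]
  have hz : |y/s| ≤ 1/2 := by
    rw [abs_div, abs_of_pos hspos, div_le_iff₀ hspos]; linarith
  have hzq : |q*(y/s)| ≤ |y/s| := by
    rw [abs_mul, abs_of_pos hq0]; nlinarith [abs_nonneg (y/s)]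
  have hzp : |p₀*(y/s)| ≤ |y/s| := by
    rw [abs_mul, abs_of_pos hp0]; nlinarith [abs_nonneg (y/s)]
  have hx1 : |q*(y/s)| ≤ 1/2 := le_trans hzq hz
  have hx2 : |p₀*(y/s)| ≤ 1/2 := le_trans hzp hz
  have hR1 := log_taylor3 _ hx1
  have hR2 := log_taylor3 (-(p₀*(y/s))) (by rwa [abs_neg])
  have e1 : (1 : ℝ) - -(p₀*(y/s)) = 1 + p₀*(y/s) := by ring
  rw [e1] at hR2
  have e2 : Real.log (1 + p₀*(y/s)) + (-(p₀*(y/s)) + (-(p₀*(y/s)))^2/2 + (-(p₀*(y/s)))^3/3)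
      = Real.log (1 + p₀*(y/s)) - ((p₀*(y/s)) - (p₀*(y/s))^2/2 + (p₀*(y/s))^3/3) := by ring
  rw [e2, abs_neg] at hR2
  -- key algebraic identity
  have hncast : (n:ℝ) = s^2/(p₀*q) := by rw [hs2]; field_simp
  have hkey := key_alg p₀ q u y (n:ℝ) s hp0.ne' hq0.ne' hspos.ne' hqdef hncast
  have heq : (p₀ * (n:ℝ) - u * s) * Real.log (1 - q * (y / s))
      + (q * (n:ℝ) + u * s) * Real.log (1 + p₀ * (y / s))
      - (u * y - y ^ 2 / 2 + (q - p₀) * (y ^ 2 / s) * (u / 2 - y / 3))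
      = (p₀ * (n:ℝ) - u * s) * (Real.log (1 - q*(y/s)) + (q*(y/s) + (q*(y/s))^2/2 + (q*(y/s))^3/3))
        + (q * (n:ℝ) + u * s) * (Real.log (1 + p₀*(y/s)) - ((p₀*(y/s)) - (p₀*(y/s))^2/2 + (p₀*(y/s))^3/3))
        + u*y^3*(q^3+p₀^3)/(3*(p₀*q))/(n:ℝ) := by linear_combination hkey
  -- size bounds
  have hpq1 : p₀*q ≤ 1 := by nlinarith
  have hsn : s ≤ (n:ℝ) := by nlinarith [hspos.le]
  have habsA : |p₀ * (n:ℝ) - u * s| ≤ (1+|u|)*(n:ℝ) := by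
    refine abs_le.mpr ⟨?_, ?_⟩ <;>
      nlinarith [le_abs_self u, neg_abs_le u, abs_nonneg u, hspos.le]
  have habsB : |q * (n:ℝ) + u * s| ≤ (1+|u|)*(n:ℝ) := by
    refine abs_le.mpr ⟨?_, ?_⟩ <;>
      nlinarith [le_abs_self u, neg_abs_le u, abs_nonneg u, hspos.le]
  have hz4 : |y/s|^4 = y^4/(p₀*q*(n:ℝ))^2 := by
    rw [abs_div, abs_of_pos hspos, div_pow]
    congr 1
    · rw [← abs_pow]; exact abs_of_nonneg (by positivity)
    · rw [show s^4 = (s^2)^2 by ring, hs2]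
  have hRb1 : |Real.log (1 - q*(y/s)) + (q*(y/s) + (q*(y/s))^2/2 + (q*(y/s))^3/3)|
      ≤ 2*(y^4/(p₀*q*(n:ℝ))^2) := by
    refine hR1.trans ?_
    rw [← hz4]
    have h4 := pow_le_pow_left₀ (abs_nonneg (q*(y/s))) hzq 4
    exact mul_le_mul_of_nonneg_left h4 (by norm_num)
  have hRb2 : |Real.log (1 + p₀*(y/s)) - ((p₀*(y/s)) - (p₀*(y/s))^2/2 + (p₀*(y/s))^3/3)|
      ≤ 2*(y^4/(p₀*q*(n:ℝ))^2) := by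
    refine hR2.trans ?_
    rw [← hz4]
    have h4 := pow_le_pow_left₀ (abs_nonneg (p₀*(y/s))) hzp 4
    exact mul_le_mul_of_nonneg_left h4 (by norm_num)
  have hCb : |u*y^3*(q^3+p₀^3)/(3*(p₀*q))/(n:ℝ)|
      = |u*y^3*(q^3+p₀^3)/(3*(p₀*q))| * (1/(n:ℝ)) := by
    rw [abs_div, abs_of_pos hnpos]; ring
  rw [Real.norm_eq_abs, Real.norm_eq_abs, heq,
    abs_of_pos (show (0:ℝ) < 1/(n:ℝ) by positivity)]
  have hT1 : (0:ℝ) ≤ 2*(y^4/(p₀*q*(n:ℝ))^2) := by positivity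
  calc |(p₀ * (n:ℝ) - u * s) * (Real.log (1 - q*(y/s)) + (q*(y/s) + (q*(y/s))^2/2 + (q*(y/s))^3/3))
        + (q * (n:ℝ) + u * s) * (Real.log (1 + p₀*(y/s)) - ((p₀*(y/s)) - (p₀*(y/s))^2/2 + (p₀*(y/s))^3/3))
        + u*y^3*(q^3+p₀^3)/(3*(p₀*q))/(n:ℝ)|
      ≤ |(p₀ * (n:ℝ) - u * s) * (Real.log (1 - q*(y/s)) + (q*(y/s) + (q*(y/s))^2/2 + (q*(y/s))^3/3))|
        + |(q * (n:ℝ) + u * s) * (Real.log (1 + p₀*(y/s)) - ((p₀*(y/s)) - (p₀*(y/s))^2/2 + (p₀*(y/s))^3/3))|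
        + |u*y^3*(q^3+p₀^3)/(3*(p₀*q))/(n:ℝ)| := by
        exact (abs_add_le _ _).trans (by gcongr; exact abs_add_le _ _)
    _ ≤ (1+|u|)*(n:ℝ) * (2*(y^4/(p₀*q*(n:ℝ))^2))
        + (1+|u|)*(n:ℝ) * (2*(y^4/(p₀*q*(n:ℝ))^2))
        + |u*y^3*(q^3+p₀^3)/(3*(p₀*q))| * (1/(n:ℝ)) := by
        rw [abs_mul, abs_mul, hCb]
        have hA0 : (0:ℝ) ≤ (1+|u|)*(n:ℝ) := by positivity
        exact add_le_add (add_le_add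
          (mul_le_mul habsA hRb1 (abs_nonneg _) hA0)
          (mul_le_mul habsB hRb2 (abs_nonneg _) hA0)) le_rfl
    _ = (|u*y^3*(q^3+p₀^3)/(3*(p₀*q))| + 4*(1+|u|)*y^4/(p₀*q)^2) * (1/(n:ℝ)) := by
        field_simp
        ring
end

section
/- For all real u, exp(u²/2 - x²/2) ≤ exp(u²/2) for all real x, with equality iff x = 0; consequently if the two-sided p-value 2Φ(-|u|) equals 0.05 (i.e. |u| = Φ⁻¹(0.975)), then sup_x exp(u²/2 - x²/2) = exp(Φ⁻¹(0.975)²/2) < 6.9. -/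
set_option maxRecDepth 8000

open Real MeasureTheory

lemma expNegLe {s q r : ℝ} (hs : 0 ≤ s) (hq : 0 < q)
    (hqs : q ≤ ∑ i ∈ Finset.range 13, s ^ i / (Nat.factorial i : ℝ)) (hqr : 1 ≤ q * r) :
    Real.exp (-s) ≤ r := by
  have h1 : q ≤ Real.exp s := hqs.trans (Real.sum_le_exp_of_nonneg hs 13)
  rw [Real.exp_neg]
  have h2 : (Real.exp s)⁻¹ ≤ q⁻¹ := inv_anti₀ hq h1
  refine h2.trans ?_
  rw [inv_le_iff_one_le_mul₀ hq]
  linarith [hqr]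

lemma gauss_hasDerivAt (x : ℝ) :
    HasDerivAt (fun x : ℝ => Real.exp (-x ^ 2 / 2)) (-x * Real.exp (-x ^ 2 / 2)) x := by
  have h : HasDerivAt (fun x : ℝ => -x ^ 2 / 2) (-x) x := by
    have := ((hasDerivAt_pow 2 x).neg).div_const 2
    refine this.congr_deriv ?_
    push_cast
    ring
  simpa [mul_comm] using h.exp

lemma gauss_integrable : Integrable (fun x : ℝ => Real.exp (-x ^ 2 / 2)) := by
  have h := integrable_exp_neg_mul_sq (show (0:ℝ) < 1/2 by norm_num)
  exact h.congr (Filter.Eventually.of_forall fun x => by ring_nf)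

lemma gauss_continuous : Continuous (fun x : ℝ => Real.exp (-x ^ 2 / 2)) := by
  continuity

lemma gauss_convex : ConvexOn ℝ (Set.Ici 1) (fun x : ℝ => Real.exp (-x ^ 2 / 2)) := by
  apply convexOn_of_hasDerivWithinAt2_nonneg (convex_Ici 1)
    (f' := fun x => -x * Real.exp (-x ^ 2 / 2))
    (f'' := fun x => (x ^ 2 - 1) * Real.exp (-x ^ 2 / 2))
  · exact gauss_continuous.continuousOn
  · exact fun x _ => (gauss_hasDerivAt x).hasDerivWithinAt
  · intro x _
    have h1 : HasDerivAt (fun x : ℝ => -x * Real.exp (-x ^ 2 / 2))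
        ((x ^ 2 - 1) * Real.exp (-x ^ 2 / 2)) x := by
      have := ((hasDerivAt_id x).neg).mul (gauss_hasDerivAt x)
      refine this.congr_deriv ?_
      simp only [Pi.neg_apply, id_eq]
      ring
    exact h1.hasDerivWithinAt
  · intro x hx
    rw [interior_Ici] at hx
    have h1 : (1:ℝ) < x := hx
    have h2 := Real.exp_pos (-x ^ 2 / 2)
    have : (0:ℝ) ≤ x ^ 2 - 1 := by nlinarith
    exact mul_nonneg this h2.le

lemma integral_linear (A B a b : ℝ) :
    ∫ x in a..b, (A + B * x) = A * (b - a) + B * (b ^ 2 - a ^ 2) / 2 := by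
  rw [intervalIntegral.integral_add intervalIntegrable_const
      ((by fun_prop : Continuous fun x : ℝ => B * x).intervalIntegrable a b),
    intervalIntegral.integral_const, intervalIntegral.integral_const_mul,
    integral_id]
  simp [smul_eq_mul]
  ring

lemma gauss_trap {a b : ℝ} (ha : 1 ≤ a) (hab : a ≤ b) :
    ∫ x in a..b, Real.exp (-x ^ 2 / 2) ≤
      (b - a) * (Real.exp (-a ^ 2 / 2) + Real.exp (-b ^ 2 / 2)) / 2 := by
  rcases eq_or_lt_of_le hab with rfl | hlt
  · simp
  set f : ℝ → ℝ := fun x => Real.exp (-x ^ 2 / 2) with hf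
  have hba : (0:ℝ) < b - a := by linarith
  have key : ∀ x ∈ Set.Icc a b, f x ≤ (f a - (f b - f a) / (b - a) * a) + (f b - f a) / (b - a) * x := by
    intro x hx
    obtain ⟨hx1, hx2⟩ := hx
    have ht : x = ((b - x) / (b - a)) • a + ((x - a) / (b - a)) • b := by
      rw [smul_eq_mul, smul_eq_mul]
      field_simp
      ring
    have hsum : (b - x) / (b - a) + (x - a) / (b - a) = 1 := by
      field_simp
      ring
    have h0 := gauss_convex.2 (Set.mem_Ici.mpr ha) (Set.mem_Ici.mpr (ha.trans hab))
      (div_nonneg (by linarith) hba.le) (div_nonneg (by linarith) hba.le) hsum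
    rw [← ht] at h0
    have h2 : (f a - (f b - f a) / (b - a) * a) + (f b - f a) / (b - a) * x
        = ((b - x) / (b - a)) * f a + ((x - a) / (b - a)) * f b := by
      field_simp
      ring
    rw [h2]
    simpa using h0
  have hint : ∫ x in a..b, f x
      ≤ ∫ x in a..b, ((f a - (f b - f a) / (b - a) * a) + (f b - f a) / (b - a) * x) := by
    apply intervalIntegral.integral_mono_on hab
      (gauss_continuous.intervalIntegrable a b)
      ((by fun_prop : Continuous fun x : ℝ => (f a - (f b - f a) / (b - a) * a) + (f b - f a) / (b - a) * x).intervalIntegrable a b)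
      key
  refine hint.trans ?_
  rw [integral_linear]
  have hane : b - a ≠ 0 := ne_of_gt hba
  have heq : (f a - (f b - f a) / (b - a) * a) * (b - a) + (f b - f a) / (b - a) * (b ^ 2 - a ^ 2) / 2
      = (b - a) * (Real.exp (-a ^ 2 / 2) + Real.exp (-b ^ 2 / 2)) / 2 := by
    simp only [hf]
    field_simp
    ring
  exact heq.le

lemma gauss_tendsto : Filter.Tendsto (fun x : ℝ => Real.exp (-x ^ 2 / 2)) Filter.atBot (nhds 0) := by
  apply Real.tendsto_exp_atBot.comp
  have hg : Filter.Tendsto (fun x : ℝ => x / 2) Filter.atBot Filter.atBot :=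
    Filter.tendsto_id.atBot_div_const (by norm_num)
  apply Filter.tendsto_atBot_mono' Filter.atBot _ hg
  filter_upwards [Filter.eventually_le_atBot (-1 : ℝ)] with x hx
  have : x ^ 2 ≥ -x := by nlinarith
  linarith [this]

lemma gauss_tail {T : ℝ} (hT : 0 < T) :
    ∫ x in Set.Iic (-T), Real.exp (-x ^ 2 / 2) ≤ Real.exp (-T ^ 2 / 2) / T := by
  have hint : IntegrableOn (fun x : ℝ => -x * Real.exp (-x ^ 2 / 2)) (Set.Iic (-T)) := by
    have := (integrable_mul_exp_neg_mul_sq (show (0:ℝ) < 1/2 by norm_num)).neg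
    exact (this.congr (Filter.Eventually.of_forall fun x => by
      simp only [Pi.neg_apply]
      ring_nf)).integrableOn
  have key : ∫ x in Set.Iic (-T), -x * Real.exp (-x ^ 2 / 2) = Real.exp (-T ^ 2 / 2) := by
    have hder : ∀ x ∈ Set.Iic (-T), HasDerivAt (fun x : ℝ => Real.exp (-x ^ 2 / 2))
        (-x * Real.exp (-x ^ 2 / 2)) x := fun x _ => gauss_hasDerivAt x
    rw [integral_Iic_of_hasDerivAt_of_tendsto' hder hint gauss_tendsto]
    norm_num
  have hmono : ∫ x in Set.Iic (-T), T • Real.exp (-x ^ 2 / 2)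
      ≤ ∫ x in Set.Iic (-T), -x * Real.exp (-x ^ 2 / 2) := by
    apply setIntegral_mono_on
    · exact (gauss_integrable.smul (T:ℝ)).integrableOn
    · exact hint
    · exact measurableSet_Iic
    · intro x hx
      simp only [smul_eq_mul]
      have hxT : x ≤ -T := hx
      have := Real.exp_pos (-x ^ 2 / 2)
      nlinarith
  rw [integral_smul, smul_eq_mul] at hmono
  rw [le_div_iff₀ hT]
  linarith [hmono]

lemma node0 : Real.exp (-(1.963:ℝ) ^ 2 / 2) ≤ 0.14563026 := by
  rw [show (-(1.963:ℝ) ^ 2 / 2) = -(1.9266845 : ℝ) by norm_num]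
  exact expNegLe (q := 6.86670495) (by norm_num) (by norm_num)
    (by norm_num [Finset.sum_range_succ, Nat.factorial]) (by norm_num)

lemma node1 : Real.exp (-(2.043:ℝ) ^ 2 / 2) ≤ 0.12406817 := by
  rw [show (-(2.043:ℝ) ^ 2 / 2) = -(2.0869245 : ℝ) by norm_num]
  exact expNegLe (q := 8.06008552) (by norm_num) (by norm_num)
    (by norm_num [Finset.sum_range_succ, Nat.factorial]) (by norm_num)

lemma node2 : Real.exp (-(2.123:ℝ) ^ 2 / 2) ≤ 0.10502428 := by
  rw [show (-(2.123:ℝ) ^ 2 / 2) = -(2.2535645 : ℝ) by norm_num]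
  exact expNegLe (q := 9.52160783) (by norm_num) (by norm_num)
    (by norm_num [Finset.sum_range_succ, Nat.factorial]) (by norm_num)

lemma node3 : Real.exp (-(2.203:ℝ) ^ 2 / 2) ≤ 0.08833643 := by
  rw [show (-(2.203:ℝ) ^ 2 / 2) = -(2.4266045 : ℝ) by norm_num]
  exact expNegLe (q := 11.3203588) (by norm_num) (by norm_num)
    (by norm_num [Finset.sum_range_succ, Nat.factorial]) (by norm_num)

lemma node4 : Real.exp (-(2.283:ℝ) ^ 2 / 2) ≤ 0.07382626 := by
  rw [show (-(2.283:ℝ) ^ 2 / 2) = -(2.6060445 : ℝ) by norm_num]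
  exact expNegLe (q := 13.54531575) (by norm_num) (by norm_num)
    (by norm_num [Finset.sum_range_succ, Nat.factorial]) (by norm_num)

lemma node5 : Real.exp (-(2.363:ℝ) ^ 2 / 2) ≤ 0.06130605 := by
  rw [show (-(2.363:ℝ) ^ 2 / 2) = -(2.7918845 : ℝ) by norm_num]
  exact expNegLe (q := 16.31160519) (by norm_num) (by norm_num)
    (by norm_num [Finset.sum_range_succ, Nat.factorial]) (by norm_num)

lemma node6 : Real.exp (-(2.443:ℝ) ^ 2 / 2) ≤ 0.05058455 := by
  rw [show (-(2.443:ℝ) ^ 2 / 2) = -(2.9841245 : ℝ) by norm_num]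
  exact expNegLe (q := 19.7688844) (by norm_num) (by norm_num)
    (by norm_num [Finset.sum_range_succ, Nat.factorial]) (by norm_num)

lemma node7 : Real.exp (-(2.523:ℝ) ^ 2 / 2) ≤ 0.04147208 := by
  rw [show (-(2.523:ℝ) ^ 2 / 2) = -(3.1827645 : ℝ) by norm_num]
  exact expNegLe (q := 24.11261176) (by norm_num) (by norm_num)
    (by norm_num [Finset.sum_range_succ, Nat.factorial]) (by norm_num)

lemma node8 : Real.exp (-(2.603:ℝ) ^ 2 / 2) ≤ 0.03378463 := by
  rw [show (-(2.603:ℝ) ^ 2 / 2) = -(3.3878045 : ℝ) by norm_num]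
  exact expNegLe (q := 29.59926178) (by norm_num) (by norm_num)
    (by norm_num [Finset.sum_range_succ, Nat.factorial]) (by norm_num)

lemma node9 : Real.exp (-(2.683:ℝ) ^ 2 / 2) ≤ 0.02734711 := by
  rw [show (-(2.683:ℝ) ^ 2 / 2) = -(3.5992445 : ℝ) by norm_num]
  exact expNegLe (q := 36.56694421) (by norm_num) (by norm_num)
    (by norm_num [Finset.sum_range_succ, Nat.factorial]) (by norm_num)

lemma node10 : Real.exp (-(2.763:ℝ) ^ 2 / 2) ≤ 0.0219957 := by
  rw [show (-(2.763:ℝ) ^ 2 / 2) = -(3.8170845 : ℝ) by norm_num]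
  exact expNegLe (q := 45.46344788) (by norm_num) (by norm_num)
    (by norm_num [Finset.sum_range_succ, Nat.factorial]) (by norm_num)

lemma node11 : Real.exp (-(2.843:ℝ) ^ 2 / 2) ≤ 0.01757948 := by
  rw [show (-(2.843:ℝ) ^ 2 / 2) = -(4.0413245 : ℝ) by norm_num]
  exact expNegLe (q := 56.88451199) (by norm_num) (by norm_num)
    (by norm_num [Finset.sum_range_succ, Nat.factorial]) (by norm_num)

lemma node12 : Real.exp (-(2.923:ℝ) ^ 2 / 2) ≤ 0.01396137 := by
  rw [show (-(2.923:ℝ) ^ 2 / 2) = -(4.2719645 : ℝ) by norm_num]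
  exact expNegLe (q := 71.62621681) (by norm_num) (by norm_num)
    (by norm_num [Finset.sum_range_succ, Nat.factorial]) (by norm_num)

lemma node13 : Real.exp (-(3.003:ℝ) ^ 2 / 2) ≤ 0.01101845 := by
  rw [show (-(3.003:ℝ) ^ 2 / 2) = -(4.5090045 : ℝ) by norm_num]
  exact expNegLe (q := 90.75690133) (by norm_num) (by norm_num)
    (by norm_num [Finset.sum_range_succ, Nat.factorial]) (by norm_num)

lemma node14 : Real.exp (-(3.083:ℝ) ^ 2 / 2) ≤ 0.00864184 := by
  rw [show (-(3.083:ℝ) ^ 2 / 2) = -(4.7524445 : ℝ) by norm_num]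
  exact expNegLe (q := 115.71612492) (by norm_num) (by norm_num)
    (by norm_num [Finset.sum_range_succ, Nat.factorial]) (by norm_num)

lemma node15 : Real.exp (-(3.163:ℝ) ^ 2 / 2) ≤ 0.00673623 := by
  rw [show (-(3.163:ℝ) ^ 2 / 2) = -(5.0022845 : ℝ) by norm_num]
  exact expNegLe (q := 148.4511182) (by norm_num) (by norm_num)
    (by norm_num [Finset.sum_range_succ, Nat.factorial]) (by norm_num)

lemma node16 : Real.exp (-(3.243:ℝ) ^ 2 / 2) ≤ 0.00521907 := by
  rw [show (-(3.243:ℝ) ^ 2 / 2) = -(5.2585245 : ℝ) by norm_num]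
  exact expNegLe (q := 191.60523056) (by norm_num) (by norm_num)
    (by norm_num [Finset.sum_range_succ, Nat.factorial]) (by norm_num)

lemma node17 : Real.exp (-(3.323:ℝ) ^ 2 / 2) ≤ 0.00401964 := by
  rw [show (-(3.323:ℝ) ^ 2 / 2) = -(5.5211645 : ℝ) by norm_num]
  exact expNegLe (q := 248.77850141) (by norm_num) (by norm_num)
    (by norm_num [Finset.sum_range_succ, Nat.factorial]) (by norm_num)

lemma node18 : Real.exp (-(3.403:ℝ) ^ 2 / 2) ≤ 0.00307799 := by
  rw [show (-(3.403:ℝ) ^ 2 / 2) = -(5.7902045 : ℝ) by norm_num]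
  exact expNegLe (q := 324.8882415) (by norm_num) (by norm_num)
    (by norm_num [Finset.sum_range_succ, Nat.factorial]) (by norm_num)

lemma gauss_chain : ∫ x in (1.963:ℝ)..3.403, Real.exp (-x ^ 2 / 2) ≤ 0.06154204 := by
  have hIf : ∀ a b : ℝ, IntervalIntegrable (fun x : ℝ => Real.exp (-x ^ 2 / 2)) volume a b :=
    fun a b => gauss_continuous.intervalIntegrable a b
  have t0 : ∫ x in (1.963:ℝ)..2.043, Real.exp (-x ^ 2 / 2) ≤
      ((2.043:ℝ) - 1.963) * (Real.exp (-(1.963:ℝ) ^ 2 / 2) + Real.exp (-(2.043:ℝ) ^ 2 / 2)) / 2 :=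
    gauss_trap (by norm_num) (by norm_num)
  have t1 : ∫ x in (2.043:ℝ)..2.123, Real.exp (-x ^ 2 / 2) ≤
      ((2.123:ℝ) - 2.043) * (Real.exp (-(2.043:ℝ) ^ 2 / 2) + Real.exp (-(2.123:ℝ) ^ 2 / 2)) / 2 :=
    gauss_trap (by norm_num) (by norm_num)
  have t2 : ∫ x in (2.123:ℝ)..2.203, Real.exp (-x ^ 2 / 2) ≤
      ((2.203:ℝ) - 2.123) * (Real.exp (-(2.123:ℝ) ^ 2 / 2) + Real.exp (-(2.203:ℝ) ^ 2 / 2)) / 2 :=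
    gauss_trap (by norm_num) (by norm_num)
  have t3 : ∫ x in (2.203:ℝ)..2.283, Real.exp (-x ^ 2 / 2) ≤
      ((2.283:ℝ) - 2.203) * (Real.exp (-(2.203:ℝ) ^ 2 / 2) + Real.exp (-(2.283:ℝ) ^ 2 / 2)) / 2 :=
    gauss_trap (by norm_num) (by norm_num)
  have t4 : ∫ x in (2.283:ℝ)..2.363, Real.exp (-x ^ 2 / 2) ≤
      ((2.363:ℝ) - 2.283) * (Real.exp (-(2.283:ℝ) ^ 2 / 2) + Real.exp (-(2.363:ℝ) ^ 2 / 2)) / 2 :=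
    gauss_trap (by norm_num) (by norm_num)
  have t5 : ∫ x in (2.363:ℝ)..2.443, Real.exp (-x ^ 2 / 2) ≤
      ((2.443:ℝ) - 2.363) * (Real.exp (-(2.363:ℝ) ^ 2 / 2) + Real.exp (-(2.443:ℝ) ^ 2 / 2)) / 2 :=
    gauss_trap (by norm_num) (by norm_num)
  have t6 : ∫ x in (2.443:ℝ)..2.523, Real.exp (-x ^ 2 / 2) ≤
      ((2.523:ℝ) - 2.443) * (Real.exp (-(2.443:ℝ) ^ 2 / 2) + Real.exp (-(2.523:ℝ) ^ 2 / 2)) / 2 :=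
    gauss_trap (by norm_num) (by norm_num)
  have t7 : ∫ x in (2.523:ℝ)..2.603, Real.exp (-x ^ 2 / 2) ≤
      ((2.603:ℝ) - 2.523) * (Real.exp (-(2.523:ℝ) ^ 2 / 2) + Real.exp (-(2.603:ℝ) ^ 2 / 2)) / 2 :=
    gauss_trap (by norm_num) (by norm_num)
  have t8 : ∫ x in (2.603:ℝ)..2.683, Real.exp (-x ^ 2 / 2) ≤
      ((2.683:ℝ) - 2.603) * (Real.exp (-(2.603:ℝ) ^ 2 / 2) + Real.exp (-(2.683:ℝ) ^ 2 / 2)) / 2 :=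
    gauss_trap (by norm_num) (by norm_num)
  have t9 : ∫ x in (2.683:ℝ)..2.763, Real.exp (-x ^ 2 / 2) ≤
      ((2.763:ℝ) - 2.683) * (Real.exp (-(2.683:ℝ) ^ 2 / 2) + Real.exp (-(2.763:ℝ) ^ 2 / 2)) / 2 :=
    gauss_trap (by norm_num) (by norm_num)
  have t10 : ∫ x in (2.763:ℝ)..2.843, Real.exp (-x ^ 2 / 2) ≤
      ((2.843:ℝ) - 2.763) * (Real.exp (-(2.763:ℝ) ^ 2 / 2) + Real.exp (-(2.843:ℝ) ^ 2 / 2)) / 2 :=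
    gauss_trap (by norm_num) (by norm_num)
  have t11 : ∫ x in (2.843:ℝ)..2.923, Real.exp (-x ^ 2 / 2) ≤
      ((2.923:ℝ) - 2.843) * (Real.exp (-(2.843:ℝ) ^ 2 / 2) + Real.exp (-(2.923:ℝ) ^ 2 / 2)) / 2 :=
    gauss_trap (by norm_num) (by norm_num)
  have t12 : ∫ x in (2.923:ℝ)..3.003, Real.exp (-x ^ 2 / 2) ≤
      ((3.003:ℝ) - 2.923) * (Real.exp (-(2.923:ℝ) ^ 2 / 2) + Real.exp (-(3.003:ℝ) ^ 2 / 2)) / 2 :=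
    gauss_trap (by norm_num) (by norm_num)
  have t13 : ∫ x in (3.003:ℝ)..3.083, Real.exp (-x ^ 2 / 2) ≤
      ((3.083:ℝ) - 3.003) * (Real.exp (-(3.003:ℝ) ^ 2 / 2) + Real.exp (-(3.083:ℝ) ^ 2 / 2)) / 2 :=
    gauss_trap (by norm_num) (by norm_num)
  have t14 : ∫ x in (3.083:ℝ)..3.163, Real.exp (-x ^ 2 / 2) ≤
      ((3.163:ℝ) - 3.083) * (Real.exp (-(3.083:ℝ) ^ 2 / 2) + Real.exp (-(3.163:ℝ) ^ 2 / 2)) / 2 :=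
    gauss_trap (by norm_num) (by norm_num)
  have t15 : ∫ x in (3.163:ℝ)..3.243, Real.exp (-x ^ 2 / 2) ≤
      ((3.243:ℝ) - 3.163) * (Real.exp (-(3.163:ℝ) ^ 2 / 2) + Real.exp (-(3.243:ℝ) ^ 2 / 2)) / 2 :=
    gauss_trap (by norm_num) (by norm_num)
  have t16 : ∫ x in (3.243:ℝ)..3.323, Real.exp (-x ^ 2 / 2) ≤
      ((3.323:ℝ) - 3.243) * (Real.exp (-(3.243:ℝ) ^ 2 / 2) + Real.exp (-(3.323:ℝ) ^ 2 / 2)) / 2 :=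
    gauss_trap (by norm_num) (by norm_num)
  have t17 : ∫ x in (3.323:ℝ)..3.403, Real.exp (-x ^ 2 / 2) ≤
      ((3.403:ℝ) - 3.323) * (Real.exp (-(3.323:ℝ) ^ 2 / 2) + Real.exp (-(3.403:ℝ) ^ 2 / 2)) / 2 :=
    gauss_trap (by norm_num) (by norm_num)
  have s1 : ∫ x in (1.963:ℝ)..2.123, Real.exp (-x ^ 2 / 2)
      = (∫ x in (1.963:ℝ)..2.043, Real.exp (-x ^ 2 / 2))
        + ∫ x in (2.043:ℝ)..2.123, Real.exp (-x ^ 2 / 2) :=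
    (intervalIntegral.integral_add_adjacent_intervals (hIf _ _) (hIf _ _)).symm
  have s2 : ∫ x in (1.963:ℝ)..2.203, Real.exp (-x ^ 2 / 2)
      = (∫ x in (1.963:ℝ)..2.123, Real.exp (-x ^ 2 / 2))
        + ∫ x in (2.123:ℝ)..2.203, Real.exp (-x ^ 2 / 2) :=
    (intervalIntegral.integral_add_adjacent_intervals (hIf _ _) (hIf _ _)).symm
  have s3 : ∫ x in (1.963:ℝ)..2.283, Real.exp (-x ^ 2 / 2)
      = (∫ x in (1.963:ℝ)..2.203, Real.exp (-x ^ 2 / 2))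
        + ∫ x in (2.203:ℝ)..2.283, Real.exp (-x ^ 2 / 2) :=
    (intervalIntegral.integral_add_adjacent_intervals (hIf _ _) (hIf _ _)).symm
  have s4 : ∫ x in (1.963:ℝ)..2.363, Real.exp (-x ^ 2 / 2)
      = (∫ x in (1.963:ℝ)..2.283, Real.exp (-x ^ 2 / 2))
        + ∫ x in (2.283:ℝ)..2.363, Real.exp (-x ^ 2 / 2) :=
    (intervalIntegral.integral_add_adjacent_intervals (hIf _ _) (hIf _ _)).symm
  have s5 : ∫ x in (1.963:ℝ)..2.443, Real.exp (-x ^ 2 / 2)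
      = (∫ x in (1.963:ℝ)..2.363, Real.exp (-x ^ 2 / 2))
        + ∫ x in (2.363:ℝ)..2.443, Real.exp (-x ^ 2 / 2) :=
    (intervalIntegral.integral_add_adjacent_intervals (hIf _ _) (hIf _ _)).symm
  have s6 : ∫ x in (1.963:ℝ)..2.523, Real.exp (-x ^ 2 / 2)
      = (∫ x in (1.963:ℝ)..2.443, Real.exp (-x ^ 2 / 2))
        + ∫ x in (2.443:ℝ)..2.523, Real.exp (-x ^ 2 / 2) :=
    (intervalIntegral.integral_add_adjacent_intervals (hIf _ _) (hIf _ _)).symm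
  have s7 : ∫ x in (1.963:ℝ)..2.603, Real.exp (-x ^ 2 / 2)
      = (∫ x in (1.963:ℝ)..2.523, Real.exp (-x ^ 2 / 2))
        + ∫ x in (2.523:ℝ)..2.603, Real.exp (-x ^ 2 / 2) :=
    (intervalIntegral.integral_add_adjacent_intervals (hIf _ _) (hIf _ _)).symm
  have s8 : ∫ x in (1.963:ℝ)..2.683, Real.exp (-x ^ 2 / 2)
      = (∫ x in (1.963:ℝ)..2.603, Real.exp (-x ^ 2 / 2))
        + ∫ x in (2.603:ℝ)..2.683, Real.exp (-x ^ 2 / 2) :=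
    (intervalIntegral.integral_add_adjacent_intervals (hIf _ _) (hIf _ _)).symm
  have s9 : ∫ x in (1.963:ℝ)..2.763, Real.exp (-x ^ 2 / 2)
      = (∫ x in (1.963:ℝ)..2.683, Real.exp (-x ^ 2 / 2))
        + ∫ x in (2.683:ℝ)..2.763, Real.exp (-x ^ 2 / 2) :=
    (intervalIntegral.integral_add_adjacent_intervals (hIf _ _) (hIf _ _)).symm
  have s10 : ∫ x in (1.963:ℝ)..2.843, Real.exp (-x ^ 2 / 2)
      = (∫ x in (1.963:ℝ)..2.763, Real.exp (-x ^ 2 / 2))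
        + ∫ x in (2.763:ℝ)..2.843, Real.exp (-x ^ 2 / 2) :=
    (intervalIntegral.integral_add_adjacent_intervals (hIf _ _) (hIf _ _)).symm
  have s11 : ∫ x in (1.963:ℝ)..2.923, Real.exp (-x ^ 2 / 2)
      = (∫ x in (1.963:ℝ)..2.843, Real.exp (-x ^ 2 / 2))
        + ∫ x in (2.843:ℝ)..2.923, Real.exp (-x ^ 2 / 2) :=
    (intervalIntegral.integral_add_adjacent_intervals (hIf _ _) (hIf _ _)).symm
  have s12 : ∫ x in (1.963:ℝ)..3.003, Real.exp (-x ^ 2 / 2)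
      = (∫ x in (1.963:ℝ)..2.923, Real.exp (-x ^ 2 / 2))
        + ∫ x in (2.923:ℝ)..3.003, Real.exp (-x ^ 2 / 2) :=
    (intervalIntegral.integral_add_adjacent_intervals (hIf _ _) (hIf _ _)).symm
  have s13 : ∫ x in (1.963:ℝ)..3.083, Real.exp (-x ^ 2 / 2)
      = (∫ x in (1.963:ℝ)..3.003, Real.exp (-x ^ 2 / 2))
        + ∫ x in (3.003:ℝ)..3.083, Real.exp (-x ^ 2 / 2) :=
    (intervalIntegral.integral_add_adjacent_intervals (hIf _ _) (hIf _ _)).symm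
  have s14 : ∫ x in (1.963:ℝ)..3.163, Real.exp (-x ^ 2 / 2)
      = (∫ x in (1.963:ℝ)..3.083, Real.exp (-x ^ 2 / 2))
        + ∫ x in (3.083:ℝ)..3.163, Real.exp (-x ^ 2 / 2) :=
    (intervalIntegral.integral_add_adjacent_intervals (hIf _ _) (hIf _ _)).symm
  have s15 : ∫ x in (1.963:ℝ)..3.243, Real.exp (-x ^ 2 / 2)
      = (∫ x in (1.963:ℝ)..3.163, Real.exp (-x ^ 2 / 2))
        + ∫ x in (3.163:ℝ)..3.243, Real.exp (-x ^ 2 / 2) :=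
    (intervalIntegral.integral_add_adjacent_intervals (hIf _ _) (hIf _ _)).symm
  have s16 : ∫ x in (1.963:ℝ)..3.323, Real.exp (-x ^ 2 / 2)
      = (∫ x in (1.963:ℝ)..3.243, Real.exp (-x ^ 2 / 2))
        + ∫ x in (3.243:ℝ)..3.323, Real.exp (-x ^ 2 / 2) :=
    (intervalIntegral.integral_add_adjacent_intervals (hIf _ _) (hIf _ _)).symm
  have s17 : ∫ x in (1.963:ℝ)..3.403, Real.exp (-x ^ 2 / 2)
      = (∫ x in (1.963:ℝ)..3.323, Real.exp (-x ^ 2 / 2))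
        + ∫ x in (3.323:ℝ)..3.403, Real.exp (-x ^ 2 / 2) :=
    (intervalIntegral.integral_add_adjacent_intervals (hIf _ _) (hIf _ _)).symm
  linarith [node0, node1, node2, node3, node4, node5, node6, node7, node8, node9, node10, node11, node12, node13, node14, node15, node16, node17, node18]

theorem stmt_12 :
    (∀ u x : ℝ,
        Real.exp (u ^ 2 / 2 - x ^ 2 / 2) ≤ Real.exp (u ^ 2 / 2) ∧
          (Real.exp (u ^ 2 / 2 - x ^ 2 / 2) = Real.exp (u ^ 2 / 2) ↔ x = 0)) ∧
      ∀ u : ℝ,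
        2 * ((1 / Real.sqrt (2 * Real.pi)) *
            ∫ x in Set.Iic (-|u|), Real.exp (-x ^ 2 / 2)) = 0.05 →
          (⨆ x : ℝ, Real.exp (u ^ 2 / 2 - x ^ 2 / 2)) = Real.exp (u ^ 2 / 2) ∧
            Real.exp (u ^ 2 / 2) < 6.9 := by
  have key1 : ∀ u x : ℝ, Real.exp (u ^ 2 / 2 - x ^ 2 / 2) ≤ Real.exp (u ^ 2 / 2) ∧
      (Real.exp (u ^ 2 / 2 - x ^ 2 / 2) = Real.exp (u ^ 2 / 2) ↔ x = 0) := by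
    intro u x
    constructor
    · apply Real.exp_le_exp.mpr
      nlinarith [sq_nonneg x]
    · rw [Real.exp_eq_exp]
      constructor
      · intro h
        have hx2 : x ^ 2 = 0 := by linarith
        exact (pow_eq_zero_iff (two_ne_zero)).mp hx2
      · rintro rfl
        norm_num
  refine ⟨key1, fun u hyp => ?_⟩
  constructor
  · -- the supremum
    have hbdd : BddAbove (Set.range fun x : ℝ => Real.exp (u ^ 2 / 2 - x ^ 2 / 2)) := by
      refine ⟨Real.exp (u ^ 2 / 2), ?_⟩
      rintro y ⟨x, rfl⟩
      exact (key1 u x).1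
    apply le_antisymm (ciSup_le fun x => (key1 u x).1)
    have h0 := le_ciSup hbdd 0
    simpa using h0
  · -- the numeric bound
    by_contra h69
    push_neg at h69
    -- sqrt (2 pi) bounds
    have hpi := Real.pi_gt_d6
    have hs2pi : (2.5066 : ℝ) < Real.sqrt (2 * Real.pi) := by
      rw [show (2.5066:ℝ) = Real.sqrt (2.5066 ^ 2) by
        rw [Real.sqrt_sq (by norm_num)]]
      apply Real.sqrt_lt_sqrt (by norm_num)
      nlinarith
    have hs2pi_pos : (0:ℝ) < Real.sqrt (2 * Real.pi) := by linarith
    -- the integral equals sqrt(2 pi)/40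
    have hIu : ∫ x in Set.Iic (-|u|), Real.exp (-x ^ 2 / 2) = Real.sqrt (2 * Real.pi) / 40 := by
      set S := Real.sqrt (2 * Real.pi) with hS
      set I := ∫ x in Set.Iic (-|u|), Real.exp (-x ^ 2 / 2) with hI
      have hSne : S ≠ 0 := ne_of_gt hs2pi_pos
      rw [one_div] at hyp
      have h1 : S⁻¹ * I = 0.05 / 2 := by linarith
      calc I = S * (S⁻¹ * I) := by rw [← mul_assoc, mul_inv_cancel₀ hSne, one_mul]
        _ = S * (0.05 / 2) := by rw [h1]
        _ = S / 40 := by ring_nf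
    -- exp (1.9266845) < 6.9
    have hexpb : Real.exp (0.9266845 : ℝ) ≤ 2.5262195 := by
      have habs : |(0.9266845 : ℝ)| = 0.9266845 := abs_of_pos (by norm_num)
      have h := Real.exp_bound (x := 0.9266845) (by rw [habs]; norm_num) (n := 10) (by norm_num)
      rw [abs_le, habs] at h
      have h2 := h.2
      norm_num [Finset.sum_range_succ, Nat.factorial] at h2 ⊢
      linarith
    have hexp19 : Real.exp (1.9266845 : ℝ) < 6.9 := by
      have he : Real.exp (1.9266845 : ℝ) = Real.exp 1 * Real.exp (0.9266845 : ℝ) := by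
        rw [← Real.exp_add]
        norm_num
      have h1 := Real.exp_one_lt_d9
      have h2 := Real.exp_pos (0.9266845 : ℝ)
      rw [he]
      nlinarith
    -- |u| > 1.963
    have hu2 : (1.9266845 : ℝ) < u ^ 2 / 2 :=
      Real.exp_lt_exp.mp (lt_of_lt_of_le hexp19 h69)
    have hu : (1.963 : ℝ) < |u| := by
      nlinarith [sq_abs u, abs_nonneg u]
    -- monotonicity of the integral in the set
    have hsub : ∫ x in Set.Iic (-|u|), Real.exp (-x ^ 2 / 2)
        ≤ ∫ x in Set.Iic (-(1.963:ℝ)), Real.exp (-x ^ 2 / 2) := by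
      apply setIntegral_mono_set gauss_integrable.integrableOn
      · exact Filter.Eventually.of_forall fun x => (Real.exp_pos _).le
      · exact Filter.Eventually.of_forall (Set.Iic_subset_Iic.mpr (by linarith))
    -- split the integral
    have hsplit := intervalIntegral.integral_Iic_sub_Iic
      (f := fun x : ℝ => Real.exp (-x ^ 2 / 2)) (μ := volume)
      (a := (-3.403 : ℝ)) (b := (-1.963 : ℝ))
      gauss_integrable.integrableOn gauss_integrable.integrableOn
    beta_reduce at hsplit
    -- reflect the middle integral
    have hrefl : ∫ x in (-3.403 : ℝ)..(-1.963 : ℝ), Real.exp (-x ^ 2 / 2)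
        = ∫ x in (1.963 : ℝ)..(3.403 : ℝ), Real.exp (-x ^ 2 / 2) := by
      have h := intervalIntegral.integral_comp_neg (a := (1.963:ℝ)) (b := (3.403:ℝ))
        (fun x : ℝ => Real.exp (-x ^ 2 / 2))
      simp only [neg_sq] at h
      rw [← h]
    -- tail bound
    have htail := gauss_tail (show (0:ℝ) < 3.403 by norm_num)
    have htailnum := node18
    have hchain := gauss_chain
    have hfinal : Real.exp (-(3.403:ℝ) ^ 2 / 2) / 3.403 ≤ (0.00307799 : ℝ) / 3.403 := by
      gcongr
    linarith [hIu, hsub, hsplit, hrefl, htail, hchain, hfinal, hs2pi]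
end
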